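/- arXiv:0707.2986 — 8 statements merged into one kernel-verified Lean document; each statement's English description precedes it below -/
import Mathlib

section
/- For every k ≥ 1, the k×k Hankel matrix with (i,j)-entry the Catalan number C_{i+j−2} (indices 1 ≤ i,j ≤ k) has determinant 1. -/
open Finset

def fcat : ℕ → ℕ → ℚ
  | 0, 0 => 1
  | 0, _+1 => 0
  | m+1, 0 => fcat m 0 + fcat m 1
  | m+1, l+1 => fcat m l + 2 * fcat m (l+1) + fcat m (l+2)

lemma fcat_zero_of_lt : ∀ m j : ℕ, m < j → fcat m j = 0 := by
  intro m
  induction m with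
  | zero => intro j hj; match j, hj with | (l+1), _ => rfl
  | succ m ih =>
    intro j hj
    match j, hj with
    | (l+1), hj =>
      rw [fcat, ih l (by omega), ih (l+1) (by omega), ih (l+2) (by omega)]
      ring

lemma dpascal (n k : ℕ) :
    (((n+2).choose (k+2) : ℕ) : ℚ) = n.choose k + 2 * n.choose (k+1) + n.choose (k+2) := by
  have h1 : (n+2).choose (k+2) = (n+1).choose (k+1) + (n+1).choose (k+2) :=
    Nat.choose_succ_succ _ _
  have h2 : (n+1).choose (k+1) = n.choose k + n.choose (k+1) := Nat.choose_succ_succ _ _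
  have h3 : (n+1).choose (k+2) = n.choose (k+1) + n.choose (k+2) := Nat.choose_succ_succ _ _
  rw [h1, h2, h3]; push_cast; ring

lemma fcat_closed : ∀ m j : ℕ, j ≤ m →
    fcat m j = ((2*m).choose (m - j) : ℚ) - ((2*m).choose (m + j + 1) : ℚ) := by
  intro m
  induction m with
  | zero =>
    intro j hj
    interval_cases j
    simp [fcat]
  | succ m ih =>
    intro j hj
    rcases j with _ | l
    · -- j = 0
      rcases m with _ | m'
      · show fcat 1 0 = ((2:ℕ).choose 1 : ℚ) - ((2:ℕ).choose 2 : ℚ)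
        norm_num [fcat]
      · -- m = m' + 1
        rw [fcat, ih 0 (by omega), ih 1 (by omega)]
        have e1 : 2 * (m' + 1 + 1) = (2*m'+2) + 2 := by ring
        have e2 : 2 * (m' + 1) = 2*m'+2 := by ring
        have e3 : m' + 1 + 1 - 0 = m' + 2 := by omega
        have e4 : m' + 1 + 1 + 0 + 1 = m' + 3 := by omega
        have e5 : m' + 1 - 0 = m' + 1 := by omega
        have e6 : m' + 1 + 0 + 1 = m' + 2 := by omega
        have e7 : m' + 1 - 1 = m' := by omega
        have e8 : m' + 1 + 1 + 1 = m' + 3 := by omega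
        rw [e1, e2, e3, e4, e5, e6, e7, e8]
        rw [show m' + 2 = m' + 2 from rfl]
        rw [show ((2*m'+2+2).choose (m'+2) : ℚ) = _ from dpascal (2*m'+2) m',
            show ((2*m'+2+2).choose (m'+3) : ℚ) = _ from dpascal (2*m'+2) (m'+1)]
        push_cast
        ring_nf
    · -- j = l + 1
      by_cases htop : l + 1 = m + 1
      · -- j = m + 1
        have hl : l = m := by omega
        subst hl
        rw [fcat, ih l le_rfl, fcat_zero_of_lt l (l+1) (by omega),
            fcat_zero_of_lt l (l+2) (by omega)]
        have e1 : l - l = 0 := by omega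
        have e2 : 2 * (l+1) = 2*l+2 := by omega
        have e3 : l + 1 - (l+1) = 0 := by omega
        rw [e1, e2, e3]
        rw [Nat.choose_zero_right,
            Nat.choose_eq_zero_of_lt (by omega : 2*l < l + l + 1),
            Nat.choose_eq_zero_of_lt (by omega : 2*l+2 < l + 1 + (l+1) + 1)]
        norm_num
      · by_cases hmid : l + 1 = m
        · -- j = m, m = l+1
          subst hmid
          rw [fcat, ih l (by omega), ih (l+1) le_rfl,
              fcat_zero_of_lt (l+1) (l+2) (by omega)]
          have e1 : l + 1 - l = 1 := by omega
          have e2 : 2 * (l+1) = 2*l+2 := by omega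
          have e3 : l + 1 - (l+1) = 0 := by omega
          have e4 : 2 * (l+1+1) = 2*l+4 := by omega
          have e5 : l + 1 + 1 - (l+1) = 1 := by omega
          have e6 : l + 1 + 1 + (l+1) + 1 = 2*l+4 := by omega
          have e7 : l + 1 + l + 1 = 2*l+2 := by omega
          have e8 : l + 1 + (l+1) + 1 = 2*l+3 := by omega
          rw [e1, e2, e3, e4, e5, e6, e7, e8]
          rw [Nat.choose_one_right, Nat.choose_one_right, Nat.choose_self,
              Nat.choose_self, Nat.choose_zero_right,
              Nat.choose_eq_zero_of_lt (by omega : 2*l+2 < 2*l+3)]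
          push_cast; ring
        · -- l + 2 ≤ m : generic case
          have hd : ∃ d, m = l + d + 2 := ⟨m - l - 2, by omega⟩
          obtain ⟨d, rfl⟩ := hd
          rw [fcat, ih l (by omega), ih (l+1) (by omega), ih (l+2) (by omega)]
          have e1 : 2 * (l+d+2) = 2*l+2*d+4 := by ring
          have e2 : l+d+2 - l = d+2 := by omega
          have e3 : l+d+2 + l + 1 = 2*l+d+3 := by omega
          have e4 : l+d+2 - (l+1) = d+1 := by omega
          have e5 : l+d+2 + (l+1) + 1 = 2*l+d+4 := by omega
          have e6 : l+d+2 - (l+2) = d := by omega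
          have e7 : l+d+2 + (l+2) + 1 = 2*l+d+5 := by omega
          have e8 : 2 * (l+d+2+1) = (2*l+2*d+4) + 2 := by ring
          have e9 : l+d+2+1 - (l+1) = d + 2 := by omega
          have e10 : l+d+2+1 + (l+1) + 1 = 2*l+d+5 := by omega
          rw [e1, e2, e3, e4, e5, e6, e7, e8, e9, e10]
          rw [show ((2*l+2*d+4+2).choose (d+2) : ℚ) = _ from dpascal (2*l+2*d+4) d,
              show ((2*l+2*d+4+2).choose (2*l+d+3+2) : ℚ) = _ from dpascal (2*l+2*d+4) (2*l+d+3)]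
          push_cast
          ring_nf

lemma fcat_diag (m : ℕ) : fcat m m = 1 := by
  rw [fcat_closed m m le_rfl, Nat.sub_self, Nat.choose_zero_right,
      Nat.choose_eq_zero_of_lt (by omega : 2*m < m + m + 1)]
  norm_num

lemma fcat_zero_eq_catalan (s : ℕ) : fcat s 0 = (catalan s : ℚ) := by
  have hc : ((s:ℚ) + 1) * (catalan s : ℚ) = ((2*s).choose s : ℚ) := by
    have := succ_mul_catalan_eq_centralBinom s
    have : ((s+1) * catalan s : ℕ) = ((2*s).choose s : ℕ) := by
      rw [this]; rfl
    exact_mod_cast congrArg (Nat.cast : ℕ → ℚ) this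
  have hch : ((2*s).choose (s+1) : ℚ) * ((s:ℚ)+1) = ((2*s).choose s : ℚ) * s := by
    have := Nat.choose_succ_right_eq (2*s) s
    have h2 : 2*s - s = s := by omega
    rw [h2] at this
    exact_mod_cast congrArg (Nat.cast : ℕ → ℚ) this
  have hf : fcat s 0 = ((2*s).choose s : ℚ) - ((2*s).choose (s+1) : ℚ) := by
    rw [fcat_closed s 0 (Nat.zero_le s)]
    norm_num
  have hne : ((s:ℚ) + 1) ≠ 0 := by positivity
  have : ((s:ℚ)+1) * fcat s 0 = ((s:ℚ)+1) * (catalan s : ℚ) := by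
    rw [hf, hc]
    nlinarith [hch]
  exact mul_left_cancel₀ hne this

lemma fcat_zero_left : ∀ j : ℕ, fcat 0 j = if j = 0 then 1 else 0 := by
  intro j
  rcases j with _ | j <;> simp [fcat]

open Finset in
lemma key_shift (i M : ℕ) (g : ℕ → ℚ) (hi : i ≤ M) :
    ∑ l ∈ range (M+2), fcat (i+1) l * g l =
      (∑ l ∈ range (M+2), (fcat i l * g (l+1) + 2 * (fcat i l * g l) + fcat i (l+1) * g l))
        - fcat i 0 * g 0 := by
  rw [Finset.sum_range_succ' (fun l => fcat (i+1) l * g l) (M+1)]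
  have h1 : ∀ l, fcat (i+1) (l+1) * g (l+1) =
      fcat i l * g (l+1) + 2 * (fcat i (l+1) * g (l+1)) + fcat i (l+2) * g (l+1) := by
    intro l; rw [fcat]; ring
  simp only [h1]
  have h0 : fcat (i+1) 0 * g 0 = fcat i 0 * g 0 + fcat i 1 * g 0 := by
    rw [fcat]; ring
  rw [h0]
  rw [Finset.sum_add_distrib, Finset.sum_add_distrib]
  have A : ∑ l ∈ range (M+2), fcat i l * g (l+1)
      = ∑ l ∈ range (M+1), fcat i l * g (l+1) := by
    rw [Finset.sum_range_succ, fcat_zero_of_lt i (M+1) (by omega)]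
    ring
  have B : ∑ l ∈ range (M+2), 2 * (fcat i l * g l)
      = (∑ l ∈ range (M+1), 2 * (fcat i (l+1) * g (l+1))) + 2 * (fcat i 0 * g 0) :=
    Finset.sum_range_succ' (fun l => 2 * (fcat i l * g l)) (M+1)
  have C : ∑ l ∈ range (M+2), fcat i (l+1) * g l
      = (∑ l ∈ range (M+1), fcat i (l+2) * g (l+1)) + fcat i 1 * g 0 :=
    Finset.sum_range_succ' (fun l => fcat i (l+1) * g l) (M+1)
  rw [Finset.sum_add_distrib, Finset.sum_add_distrib, A, B, C]
  ring

open Finset in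
def Scat (i j : ℕ) : ℚ := ∑ l ∈ range (i+j+1), fcat i l * fcat j l

open Finset in
lemma Scat_step (i j : ℕ) : Scat (i+1) j = Scat i (j+1) := by
  unfold Scat
  have h1 : i + 1 + j + 1 = (i + j) + 2 := by ring
  have h2 : i + (j + 1) + 1 = (i + j) + 2 := by ring
  rw [h1, h2]
  rw [key_shift i (i+j) (fcat j) (by omega)]
  have h3 : ∑ l ∈ range (i+j+2), fcat i l * fcat (j+1) l
      = ∑ l ∈ range (i+j+2), fcat (j+1) l * fcat i l := by
    exact Finset.sum_congr rfl fun l _ => mul_comm _ _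
  rw [h3, key_shift j (i+j) (fcat i) (by omega)]
  have h4 : ∀ l ∈ range (i+j+2),
      fcat i l * fcat j (l+1) + 2 * (fcat i l * fcat j l) + fcat i (l+1) * fcat j l
      = fcat j l * fcat i (l+1) + 2 * (fcat j l * fcat i l) + fcat j (l+1) * fcat i l := by
    intro l _; ring
  rw [Finset.sum_congr rfl h4]
  ring

open Finset in
lemma Scat_eq_catalan (i j : ℕ) : Scat i j = (catalan (i+j) : ℚ) := by
  induction i generalizing j with
  | zero =>
    unfold Scat
    have : ∀ l ∈ range (0+j+1), fcat 0 l * fcat j l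
        = if l = 0 then fcat j l else 0 := by
      intro l _
      rw [fcat_zero_left l]
      split <;> simp
    rw [Finset.sum_congr rfl this, Finset.sum_ite_eq' (range (0+j+1)) 0 (fun l => fcat j l)]
    simp [fcat_zero_eq_catalan]
  | succ i ih =>
    rw [Scat_step, ih (j+1)]
    have : i + (j + 1) = i + 1 + j := by omega
    rw [this]

open Finset in
lemma sum_fcat_eq_catalan (i j N : ℕ) (hN : i + 1 ≤ N) :
    ∑ l ∈ range N, fcat i l * fcat j l = (catalan (i+j) : ℚ) := by
  have key : ∀ N1 N2 : ℕ, i < N1 → N1 ≤ N2 →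
      ∑ l ∈ range N2, fcat i l * fcat j l = ∑ l ∈ range N1, fcat i l * fcat j l := by
    intro N1 N2 h1 h2
    symm
    apply Finset.sum_subset
    · intro x hx
      simp only [Finset.mem_range] at *
      omega
    · intro x _ hx
      simp only [Finset.mem_range, not_lt] at hx
      rw [fcat_zero_of_lt i x (by omega)]
      ring
  rw [← key N (N + (i+j+1)) (by omega) (by omega),
      key (i+j+1) (N + (i+j+1)) (by omega) (by omega)]
  exact Scat_eq_catalan i j

/-- The `k × k` Hankel matrix whose `(i,j)`-entry (with `1 ≤ i, j ≤ k`) is the Catalan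
number `C_{i+j-2}` has determinant `1`. -/
theorem stmt_1 (k : ℕ) (hk : 1 ≤ k) :
    Matrix.det (Matrix.of fun i j : Fin k => ((catalan (i.val + j.val) : ℚ))) = 1 := by
  set F : Matrix (Fin k) (Fin k) ℚ := Matrix.of fun i l : Fin k => fcat i.val l.val with hF
  have hM : (Matrix.of fun i j : Fin k => ((catalan (i.val + j.val) : ℚ))) = F * F.transpose := by
    ext i j
    simp only [Matrix.mul_apply, Matrix.transpose_apply, hF, Matrix.of_apply]
    rw [Fin.sum_univ_eq_sum_range (fun l => fcat i.val l * fcat j.val l) k]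
    exact (sum_fcat_eq_catalan i.val j.val k i.isLt).symm
  rw [hM, Matrix.det_mul, Matrix.det_transpose]
  have hdet : F.det = 1 := by
    have htri : F.BlockTriangular OrderDual.toDual := by
      intro i j hij
      simp only [hF, Matrix.of_apply]
      exact fcat_zero_of_lt i.val j.val hij
    rw [Matrix.det_of_lowerTriangular F htri]
    simp [hF, fcat_diag]
  rw [hdet]
  norm_num
end

section
/- For every k ≥ 1, the k×k Hankel matrix with (i,j)-entry the Catalan number C_{i+j−1} (indices 1 ≤ i,j ≤ k) has determinant 1. -/
open Finset Matrix

/-- Ballot-type numbers: paths of length `2m+1` ending at height `2k+1`. -/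
def gg (m k : ℕ) : ℕ := (2*m+1).choose (m + 1 + k)

lemma gg_eq (m k : ℕ) (h : k ≤ m) : gg m k = (2*m+1).choose (m - k) := by
  rw [gg, ← Nat.choose_symm (show m + 1 + k ≤ 2*m+1 by omega)]
  congr 1; omega

lemma gg_zero (m k : ℕ) (h : m < k) : gg m k = 0 :=
  Nat.choose_eq_zero_of_lt (by omega)

noncomputable def bb (m k : ℕ) : ℚ := (gg m k : ℚ) - gg m (k+1)

lemma bb_diag (m : ℕ) : bb m m = 1 := by
  rw [bb, gg, gg, show m + 1 + m = 2*m+1 by omega, show m+1+(m+1) = 2*m+2 by omega,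
    Nat.choose_self, Nat.choose_eq_zero_of_lt (by omega)]
  norm_num

lemma bb_zero (m k : ℕ) (h : m < k) : bb m k = 0 := by
  simp [bb, gg_zero m k h, gg_zero m (k+1) (by omega)]

lemma vander (m n s : ℕ) :
    (2*m+1 + (2*n+1)).choose s = ∑ i ∈ range (s+1), (2*m+1).choose i * (2*n+1).choose (s-i) := by
  rw [Nat.add_choose_eq, Finset.Nat.sum_antidiagonal_eq_sum_range_succ_mk]

lemma sum_split (f : ℕ → ℕ) (a b : ℕ) :
    ∑ i ∈ range (a+b), f i = (∑ i ∈ range a, f i) + ∑ i ∈ range b, f (a+i) := by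
  induction b with
  | zero => simp
  | succ b ih =>
      rw [show a + (b+1) = (a+b)+1 by ring, sum_range_succ, ih, sum_range_succ]
      omega

lemma sum_ext (M N : ℕ) (h : M ≤ N) (f : ℕ → ℕ) (hf : ∀ k, M ≤ k → f k = 0) :
    ∑ k ∈ range N, f k = ∑ k ∈ range M, f k := by
  apply (Finset.sum_subset (Finset.range_subset_range.2 h) _).symm
  intro x hx hx'
  exact hf x (by simp only [mem_range] at hx hx'; omega)

lemma V1 (m n N : ℕ) (hm : m < N) (hn : n < N) :
    2 * ∑ k ∈ range N, gg m k * gg n k = (2*(m+n+1)).choose (m+n+1) := by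
  have h1 : ∑ k ∈ range N, gg m k * gg n k = ∑ k ∈ range (m+1), gg m k * gg n k := by
    apply sum_ext (m+1) N hm
    intro k hk; rw [gg_zero m k (by omega)]; ring
  have h2 : ∑ k ∈ range N, gg m k * gg n k = ∑ k ∈ range (n+1), gg m k * gg n k := by
    apply sum_ext (n+1) N hn
    intro k hk; rw [gg_zero n k (by omega)]; ring
  rw [show 2*(m+n+1) = 2*m+1 + (2*n+1) by ring, vander, show m+n+1+1 = (m+1)+(n+1) by ring,
    sum_split, two_mul]
  nth_rewrite 2 [h2]
  rw [h1]
  congr 1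
  · rw [← Finset.sum_range_reflect]
    apply Finset.sum_congr rfl
    intro i hi
    simp only [mem_range] at hi
    rw [show m + 1 - 1 - i = m - i by omega, gg_eq m (m-i) (by omega),
      show m - (m-i) = i by omega, gg,
      show n+1+(m-i) = m+n+1-i by omega]
  · apply Finset.sum_congr rfl
    intro i hi
    simp only [mem_range] at hi
    rw [show m+n+1 - (m+1+i) = n - i by omega, ← gg_eq n i (by omega)]
    rfl

lemma V2 (m n : ℕ) :
    (2*(m+n+1)).choose (m+n) = gg m 0 * gg n 0 + (∑ k ∈ range m, gg m (k+1) * gg n k)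
      + ∑ k ∈ range n, gg m k * gg n (k+1) := by
  rw [show 2*(m+n+1) = 2*m+1 + (2*n+1) by ring, vander, show m+n+1 = (m+1)+n by ring,
    sum_split]
  congr 1
  · -- first half
    rw [← Finset.sum_range_reflect, Finset.sum_range_succ']
    rw [add_comm]
    congr 1
    · -- k = 0 term
      have e2 : (2*n+1).choose n = gg n 0 := by
        have h := Nat.choose_symm (show n+1 ≤ 2*n+1 by omega)
        rw [show 2*n+1-(n+1) = n by omega] at h
        rw [gg, show n+1+0 = n+1 by omega, ← h]
      rw [show m + 1 - 1 - 0 = m - 0 by omega, ← gg_eq m 0 (by omega),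
        show m+n - (m-0) = n by omega, e2]
    · apply Finset.sum_congr rfl
      intro i hi
      simp only [mem_range] at hi
      rw [show m + 1 - 1 - (i+1) = m - (i+1) by omega, gg_eq m (i+1) (by omega)]
      congr 1
      rw [show m+n - (m-(i+1)) = n+1+i by omega]; rfl
  · apply Finset.sum_congr rfl
    intro i hi
    simp only [mem_range] at hi
    rw [show m+n - (m+1+i) = n - (i+1) by omega, ← gg_eq n (i+1) (by omega)]
    rfl

lemma catalan_cast (p : ℕ) :
    (catalan (p+1) : ℚ) = ((2*(p+1)).choose (p+1) : ℚ) - (2*(p+1)).choose p := by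
  have h1 : ((p:ℚ) + 2) * catalan (p+1) = (2*(p+1)).choose (p+1) := by
    have := succ_mul_catalan_eq_centralBinom (p+1)
    rw [Nat.centralBinom] at this
    exact_mod_cast congrArg (Nat.cast : ℕ → ℚ) this
  have h2 : ((2*(p+1)).choose (p+1) : ℚ) * (p+1) = (2*(p+1)).choose p * (p+2) := by
    have := Nat.choose_succ_right_eq (2*(p+1)) p
    rw [show 2*(p+1) - p = p + 2 by omega] at this
    exact_mod_cast congrArg (Nat.cast : ℕ → ℚ) this
  have hp : ((p:ℚ) + 2) ≠ 0 := by positivity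
  apply mul_left_cancel₀ hp
  rw [h1, mul_sub]
  nlinarith [h1, h2]

lemma key (m n N : ℕ) (hm : m < N) (hn : n < N) :
    ∑ k ∈ range N, bb m k * bb n k = (catalan (m+n+1) : ℚ) := by
  have expand : ∀ k, bb m k * bb n k
      = ((gg m k * gg n k : ℕ) : ℚ) + ((gg m (k+1) * gg n (k+1) : ℕ) : ℚ)
        - ((gg m (k+1) * gg n k : ℕ) : ℚ) - ((gg m k * gg n (k+1) : ℕ) : ℚ) := by
    intro k; rw [bb, bb]; push_cast; ring
  rw [Finset.sum_congr rfl (fun k _ => expand k)]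
  simp only [Finset.sum_sub_distrib, Finset.sum_add_distrib]
  -- shift lemma for S1
  have shift : ∑ k ∈ range N, ((gg m (k+1) * gg n (k+1) : ℕ) : ℚ)
      = (∑ k ∈ range N, ((gg m k * gg n k : ℕ) : ℚ)) - (gg m 0 * gg n 0 : ℕ) := by
    have h : ∑ k ∈ range (N+1), ((gg m k * gg n k : ℕ) : ℚ)
        = (∑ k ∈ range N, ((gg m (k+1) * gg n (k+1) : ℕ) : ℚ)) + (gg m 0 * gg n 0 : ℕ) := by
      exact Finset.sum_range_succ' _ N
    rw [Finset.sum_range_succ, gg_zero m N hm] at h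
    push_cast at h ⊢
    linarith [h]
  rw [shift]
  have hv1 : 2 * (∑ k ∈ range N, ((gg m k * gg n k : ℕ) : ℚ))
      = ((2*(m+n+1)).choose (m+n+1) : ℚ) := by
    rw [← V1 m n N hm hn]; push_cast; ring
  have hbN : ∑ k ∈ range N, gg m (k+1) * gg n k = ∑ k ∈ range m, gg m (k+1) * gg n k :=
    sum_ext m N (by omega) _ (fun k hk => by rw [gg_zero m (k+1) (by omega)]; ring)
  have hb : ∑ k ∈ range N, ((gg m (k+1) * gg n k : ℕ) : ℚ)
      = ((∑ k ∈ range m, gg m (k+1) * gg n k : ℕ) : ℚ) := by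
    rw [← Nat.cast_sum, hbN]
  have haN : ∑ k ∈ range N, gg m k * gg n (k+1) = ∑ k ∈ range n, gg m k * gg n (k+1) :=
    sum_ext n N (by omega) _ (fun k hk => by rw [gg_zero n (k+1) (by omega)]; ring)
  have ha : ∑ k ∈ range N, ((gg m k * gg n (k+1) : ℕ) : ℚ)
      = ((∑ k ∈ range n, gg m k * gg n (k+1) : ℕ) : ℚ) := by
    rw [← Nat.cast_sum, haN]
  have hv2 : ((2*(m+n+1)).choose (m+n) : ℚ)
      = (gg m 0 * gg n 0 : ℕ) + ((∑ k ∈ range m, gg m (k+1) * gg n k : ℕ) : ℚ)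
        + ((∑ k ∈ range n, gg m k * gg n (k+1) : ℕ) : ℚ) := by
    rw [← Nat.cast_add, ← Nat.cast_add, ← V2 m n]
  rw [catalan_cast (m+n), hb, ha]
  push_cast at hv1 hv2 ⊢
  linarith [hv1, hv2]

/-- The `k × k` Hankel matrix whose `(i,j)`-entry (with `1 ≤ i, j ≤ k`) is the Catalan
number `C_{i+j-1}` has determinant `1`. -/
theorem stmt_2 (k : ℕ) (hk : 1 ≤ k) :
    Matrix.det (Matrix.of fun i j : Fin k => ((catalan (i.val + j.val + 1) : ℚ))) = 1 := by
  set L : Matrix (Fin k) (Fin k) ℚ := Matrix.of fun i j : Fin k => bb i.val j.val with hL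
  have hfact : (Matrix.of fun i j : Fin k => ((catalan (i.val + j.val + 1) : ℚ))) = L * L.transpose := by
    ext i j
    rw [Matrix.mul_apply]
    simp only [Matrix.transpose_apply, hL, Matrix.of_apply]
    rw [Fin.sum_univ_eq_sum_range (fun t => bb i.val t * bb j.val t) k]
    exact (key i.val j.val k i.isLt j.isLt).symm
  have hLtri : L.BlockTriangular OrderDual.toDual := by
    intro i j hij
    exact bb_zero i.val j.val (by exact_mod_cast hij)
  have hdetL : L.det = 1 := by
    rw [Matrix.det_of_lowerTriangular L hLtri]
    apply Finset.prod_eq_one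
    intro i _
    exact bb_diag i.val
  rw [hfact, Matrix.det_mul, Matrix.det_transpose, hdetL]
  norm_num
end

section
/- Let d_j = (1/j)·binom(2j−2, j−1)·2^{1−2j} for j ≥ 1 (so that (1−x)^{1/2} = 1 − ∑_{j≥1} d_j x^j). Then for every k ≥ 1, the determinant of the k×k Hankel matrix with (i,j)-entry d_{i+j−1} equals 2^{k−2k²}. -/
open Finset Matrix

/-- `d_j = (1/j) · binom(2j-2, j-1) · 2^{1-2j}`, so that `(1-x)^{1/2} = 1 - ∑_{j≥1} d_j x^j`. -/
def dCoeff (j : ℕ) : ℚ :=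
  (1 : ℚ) / j * (Nat.choose (2 * j - 2) (j - 1)) * (2 : ℚ) ^ (1 - 2 * (j : ℤ))


/-- Integer-indexed binomial coefficient. -/
def ich (N : ℕ) (r : ℤ) : ℤ := if 0 ≤ r then (N.choose r.toNat : ℤ) else 0

lemma ich_of_neg {N : ℕ} {r : ℤ} (h : r < 0) : ich N r = 0 := by
  simp [ich, not_le.mpr h]

lemma ich_of_gt {N : ℕ} {r : ℤ} (h : (N : ℤ) < r) : ich N r = 0 := by
  have h0 : 0 ≤ r := le_of_lt ((Int.natCast_nonneg N).trans_lt h)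
  have : N < r.toNat := by omega
  simp [ich, h0, Nat.choose_eq_zero_of_lt this]

lemma ich_nat (N n : ℕ) : ich N (n : ℤ) = (N.choose n : ℤ) := by
  simp [ich]

lemma ich_pascal (N : ℕ) (r : ℤ) : ich (N + 1) r = ich N r + ich N (r - 1) := by
  rcases lt_trichotomy r 0 with h | h | h
  · rw [ich_of_neg h, ich_of_neg h, ich_of_neg (by omega)]; ring
  · subst h; simp [ich]
  · obtain ⟨s, rfl⟩ : ∃ s : ℕ, r = (s : ℤ) + 1 := ⟨(r - 1).toNat, by omega⟩
    have h1 : ((s : ℤ) + 1) = ((s + 1 : ℕ) : ℤ) := by push_cast; ring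
    have h2 : ((s : ℤ) + 1 - 1) = ((s : ℕ) : ℤ) := by push_cast; ring
    rw [h1]
    have h3 : ((s + 1 : ℕ) : ℤ) - 1 = ((s : ℕ) : ℤ) := by push_cast; ring
    rw [h3, ich_nat, ich_nat, ich_nat]
    push_cast [Nat.choose_succ_succ]
    ring

lemma ich_symm (N : ℕ) (r : ℤ) : ich N ((N : ℤ) - r) = ich N r := by
  rcases lt_trichotomy r 0 with h | h | h
  · rw [ich_of_neg h, ich_of_gt (by omega)]
  · subst h; simp [ich]
  · rcases le_or_gt r (N : ℤ) with h2 | h2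
    · obtain ⟨s, rfl⟩ : ∃ s : ℕ, r = (s : ℤ) := ⟨r.toNat, by omega⟩
      have hs : s ≤ N := by exact_mod_cast h2
      have : ((N : ℤ) - s) = ((N - s : ℕ) : ℤ) := by omega
      rw [this, ich_nat, ich_nat, Nat.choose_symm hs]
    · rw [ich_of_gt h2, ich_of_neg (by omega)]

/-- Ballot numbers, integer-indexed in the second argument. -/
def aB (n : ℕ) (m : ℤ) : ℤ := ich (2 * n) ((n : ℤ) + m) - ich (2 * n) ((n : ℤ) + m + 1)

lemma aB_of_gt {n : ℕ} {m : ℤ} (h : (n : ℤ) < m) : aB n m = 0 := by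
  rw [aB, ich_of_gt (by push_cast; omega), ich_of_gt (by push_cast; omega)]; ring

lemma aB_of_lt {n : ℕ} {m : ℤ} (h : m < -(n : ℤ) - 1) : aB n m = 0 := by
  rw [aB, ich_of_neg (by omega), ich_of_neg (by omega)]; ring

lemma aB_reflect (n : ℕ) (m : ℤ) : aB n (-1 - m) = -aB n m := by
  have h1 : (n : ℤ) + (-1 - m) = (2 * n : ℕ) - ((n : ℤ) + m + 1) := by push_cast; ring
  have h2 : (n : ℤ) + (-1 - m) + 1 = (2 * n : ℕ) - ((n : ℤ) + m) := by push_cast; ring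
  rw [aB, h2, h1, ich_symm, ich_symm, aB]; ring

lemma aB_rec (n : ℕ) (m : ℤ) : aB (n + 1) m = aB n (m - 1) + 2 * aB n m + aB n (m + 1) := by
  have pas : ∀ r : ℤ, ich (2 * (n + 1)) r = ich (2 * n) r + 2 * ich (2 * n) (r - 1)
      + ich (2 * n) (r - 2) := by
    intro r
    have e : 2 * (n + 1) = (2 * n + 1) + 1 := by ring
    rw [e, ich_pascal, ich_pascal, ich_pascal]
    have : r - 1 - 1 = r - 2 := by ring
    rw [this]; ring
  rw [aB, pas, pas, aB, aB, aB]
  push_cast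
  have e0 : (n : ℤ) + 1 + m = (n : ℤ) + m + 1 := by ring
  have e0' : (n : ℤ) + 1 + m + 1 = (n : ℤ) + m + 2 := by ring
  have e1 : (n : ℤ) + 1 + m - 1 = (n : ℤ) + m := by ring
  have e2 : (n : ℤ) + 1 + m - 2 = (n : ℤ) + m - 1 := by ring
  have e3 : (n : ℤ) + 1 + m + 1 - 1 = (n : ℤ) + m + 1 := by ring
  have e4 : (n : ℤ) + 1 + m + 1 - 2 = (n : ℤ) + m := by ring
  have e5 : (n : ℤ) + (m - 1) = (n : ℤ) + m - 1 := by ring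
  have e6 : (n : ℤ) + (m - 1) + 1 = (n : ℤ) + m := by ring
  have e7 : (n : ℤ) + (m + 1) = (n : ℤ) + m + 1 := by ring
  have e8 : (n : ℤ) + (m + 1) + 1 = (n : ℤ) + m + 2 := by ring
  rw [e8, e7, e6, e5, e4, e3, e2, e1, e0', e0]
  ring

lemma aB_diag (n : ℕ) : aB n (n : ℤ) = 1 := by
  have h1 : (n : ℤ) + n = ((2 * n : ℕ) : ℤ) := by push_cast; ring
  rw [aB, h1, ich_nat, ich_of_gt (by push_cast; omega)]
  simp

lemma aB_catalan (n : ℕ) : aB n 0 = (catalan n : ℤ) := by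
  have h2 : (n : ℤ) + 1 = ((n + 1 : ℕ) : ℤ) := by push_cast; ring
  rw [aB, add_zero, h2, ich_nat, ich_nat]
  have key : (2 * n).choose n = catalan n + (2 * n).choose (n + 1) := by
    have h3 : (2 * n).choose (n + 1) * (n + 1) = (2 * n).choose n * n := by
      rw [Nat.choose_succ_right_eq]; congr 1; omega
    have h4 : (n + 1) * catalan n = (2 * n).choose n := by
      rw [succ_mul_catalan_eq_centralBinom, Nat.centralBinom]
    apply Nat.eq_of_mul_eq_mul_left (show 0 < n + 1 by omega)
    calc (n + 1) * (2 * n).choose n = (n + 1) * catalan n + n * (2 * n).choose n := by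
          rw [h4]; ring
      _ = (n + 1) * (catalan n + (2 * n).choose (n + 1)) := by
          rw [mul_add]
          congr 1
          rw [mul_comm (n+1), h3]; ring
  rw [key]; push_cast; ring

lemma sum_shift (f : ℤ → ℤ) (K : ℤ) (M : ℕ) :
    ∑ t ∈ range M, f ((t : ℤ) - K - 1) + f ((M : ℤ) - K - 1)
      = ∑ t ∈ range M, f ((t : ℤ) - K) + f (-K - 1) := by
  induction M with
  | zero => simp
  | succ M ih =>
    rw [Finset.sum_range_succ, Finset.sum_range_succ]
    push_cast
    have e1 : (M : ℤ) + 1 - K - 1 = (M : ℤ) - K := by ring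
    rw [e1]
    have := ih
    omega

/-- The "full line" sum. -/
def Fsum (K i j : ℕ) : ℤ := ∑ t ∈ range (2 * K), aB i ((t : ℤ) - K) * aB j ((t : ℤ) - K)

lemma Fsum_step (K i j : ℕ) (hi : i + 1 < K) (hj : j + 1 < K) :
    Fsum K (i + 1) j = Fsum K i (j + 1) := by
  have expand : ∀ t : ℤ, aB (i + 1) t * aB j t
      = aB i (t - 1) * aB j t + 2 * (aB i t * aB j t) + aB i (t + 1) * aB j t := by
    intro t; rw [aB_rec]; ring
  have expand' : ∀ t : ℤ, aB i t * aB (j + 1) t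
      = aB i t * aB j (t - 1) + 2 * (aB i t * aB j t) + aB i t * aB j (t + 1) := by
    intro t; rw [aB_rec]; ring
  have e : ∀ t : ℕ, (t : ℤ) - K - 1 + 1 = (t : ℤ) - K := by intro t; ring
  have hA : ∑ t ∈ range (2 * K), aB i ((t : ℤ) - K - 1) * aB j ((t : ℤ) - K)
      = ∑ t ∈ range (2 * K), aB i ((t : ℤ) - K) * aB j ((t : ℤ) - K + 1) := by
    have h := sum_shift (fun m => aB i m * aB j (m + 1)) K (2 * K)
    simp only [e] at h
    have z1 : aB i ((2 * K : ℕ) - (K : ℤ) - 1) * aB j ((2 * K : ℕ) - (K : ℤ)) = 0 := by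
      rw [aB_of_gt (show (i : ℤ) < (2 * K : ℕ) - (K : ℤ) - 1 by push_cast; omega)]; ring
    have z2 : aB i (-(K : ℤ) - 1) * aB j (-(K : ℤ) - 1 + 1) = 0 := by
      rw [aB_of_lt (show -(K : ℤ) - 1 < -(i : ℤ) - 1 by push_cast; omega)]; ring
    rw [z1, z2, add_zero, add_zero] at h
    exact h
  have hB : ∑ t ∈ range (2 * K), aB i ((t : ℤ) - K + 1) * aB j ((t : ℤ) - K)
      = ∑ t ∈ range (2 * K), aB i ((t : ℤ) - K) * aB j ((t : ℤ) - K - 1) := by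
    have h := sum_shift (fun m => aB i (m + 1) * aB j m) K (2 * K)
    simp only [e] at h
    have z1 : aB i ((2 * K : ℕ) - (K : ℤ)) * aB j ((2 * K : ℕ) - (K : ℤ) - 1) = 0 := by
      rw [aB_of_gt (show (i : ℤ) < (2 * K : ℕ) - (K : ℤ) by push_cast; omega)]; ring
    have z2 : aB i (-(K : ℤ) - 1 + 1) * aB j (-(K : ℤ) - 1) = 0 := by
      rw [mul_comm, aB_of_lt (show -(K : ℤ) - 1 < -(j : ℤ) - 1 by push_cast; omega)]; ring
    rw [z1, z2, add_zero, add_zero] at h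
    exact h.symm
  rw [Fsum, Fsum]
  simp only [expand, expand']
  rw [Finset.sum_add_distrib, Finset.sum_add_distrib, Finset.sum_add_distrib,
    Finset.sum_add_distrib, hA, hB]
  ring

lemma Fsum_telescope : ∀ i j K : ℕ, i + j + 2 ≤ K → Fsum K i j = Fsum K 0 (i + j) := by
  intro i
  induction i with
  | zero => intro j K _; rw [Nat.zero_add]
  | succ i ih =>
    intro j K hK
    rw [Fsum_step K i j (by omega) (by omega), ih (j + 1) K (by omega)]
    congr 1
    omega

lemma aB_zero_left (m : ℤ) :
    aB 0 m = (if m = 0 then 1 else 0) - (if m = -1 then 1 else 0) := by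
  have h1 : ∀ r : ℤ, ich 0 r = if r = 0 then 1 else 0 := by
    intro r
    rcases lt_trichotomy r 0 with h | h | h
    · rw [ich_of_neg h, if_neg (by omega)]
    · subst h; simp [ich]
    · rw [ich_of_gt (by exact_mod_cast h), if_neg (by omega)]
  rw [aB]
  simp only [Nat.cast_zero, mul_zero, zero_add, h1]
  by_cases h0 : m = 0 <;> by_cases h2 : m = -1 <;> simp [h0, h2] <;> omega

lemma Fsum_zero (K n : ℕ) (hK : 1 ≤ K) : Fsum K 0 n = 2 * aB n 0 := by
  rw [Fsum]
  have key : ∀ t ∈ range (2 * K), aB 0 ((t : ℤ) - K) * aB n ((t : ℤ) - K)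
      = (if t = K then aB n 0 else 0) + (if t = K - 1 then aB n 0 else 0) := by
    intro t _
    by_cases h1 : t = K
    · rw [h1]
      simp only [sub_self, if_pos rfl, if_neg (show K ≠ K - 1 by omega)]
      rw [aB_zero_left]
      simp
    · by_cases h2 : t = K - 1
      · rw [h2]
        have e : ((K - 1 : ℕ) : ℤ) - K = -1 := by push_cast [Nat.cast_sub hK]; ring
        rw [e, aB_zero_left]
        have hr : aB n (-1) = -aB n 0 := by
          have := aB_reflect n 0
          simpa using this
        rw [hr]
        rw [if_neg (show K - 1 ≠ K by omega), if_pos rfl]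
        norm_num
      · rw [aB_zero_left, if_neg (show (t : ℤ) - K ≠ 0 by omega),
          if_neg (show (t : ℤ) - K ≠ -1 by omega), if_neg h1, if_neg h2]
        ring
  rw [Finset.sum_congr rfl key, Finset.sum_add_distrib, Finset.sum_ite_eq' (range (2 * K)),
    Finset.sum_ite_eq' (range (2 * K)), if_pos (by simp; omega), if_pos (by simp; omega)]
  ring

lemma Fsum_eq (K i j : ℕ) :
    Fsum K i j = 2 * ∑ t ∈ range K, aB i (t : ℤ) * aB j (t : ℤ) := by
  rw [Fsum, show 2 * K = K + K from by ring, Finset.sum_range_add, two_mul]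
  congr 1
  · rw [← Finset.sum_range_reflect]
    apply Finset.sum_congr rfl
    intro t ht
    rw [mem_range] at ht
    have e : ((K - 1 - t : ℕ) : ℤ) - K = -1 - (t : ℤ) := by omega
    rw [e, aB_reflect, aB_reflect]
    ring
  · apply Finset.sum_congr rfl
    intro t _
    have e : ((K + t : ℕ) : ℤ) - K = (t : ℤ) := by push_cast; ring
    rw [e]

lemma key_identity (i j K : ℕ) (hK : i + j + 2 ≤ K) :
    ∑ t ∈ range K, aB i (t : ℤ) * aB j (t : ℤ) = (catalan (i + j) : ℤ) := by
  have h1 := Fsum_eq K i j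
  rw [Fsum_telescope i j K hK, Fsum_zero K (i + j) (by omega), aB_catalan] at h1
  omega

lemma key_identity' (i j k : ℕ) (hik : i < k) :
    ∑ t ∈ range k, aB i (t : ℤ) * aB j (t : ℤ) = (catalan (i + j) : ℤ) := by
  set K := i + j + 2 + k with hKdef
  have h2 : ∑ t ∈ range k, aB i (t : ℤ) * aB j (t : ℤ)
      = ∑ t ∈ range K, aB i (t : ℤ) * aB j (t : ℤ) := by
    apply Finset.sum_subset (Finset.range_subset_range.mpr (by omega))
    intro t _ ht
    rw [mem_range, not_lt] at ht
    rw [aB_of_gt (show (i : ℤ) < t by exact_mod_cast lt_of_lt_of_le hik ht)]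
    ring
  rw [h2, key_identity i j K (by omega)]

lemma catalan_hankel_det (k : ℕ) :
    Matrix.det (Matrix.of fun i j : Fin k => (catalan (i.val + j.val) : ℚ)) = 1 := by
  classical
  set L : Matrix (Fin k) (Fin k) ℚ :=
    Matrix.of fun i m : Fin k => ((aB i.val (m.val : ℤ) : ℤ) : ℚ) with hL
  have hfact : (Matrix.of fun i j : Fin k => (catalan (i.val + j.val) : ℚ)) = L * Lᵀ := by
    ext i j
    simp only [Matrix.mul_apply, Matrix.transpose_apply, hL, Matrix.of_apply]
    rw [Fin.sum_univ_eq_sum_range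
      (fun m => ((aB i.val (m : ℤ) : ℤ) : ℚ) * ((aB j.val (m : ℤ) : ℤ) : ℚ)) k]
    rw_mod_cast [key_identity' i.val j.val k i.isLt]
  rw [hfact, Matrix.det_mul, Matrix.det_transpose]
  have hdet : L.det = 1 := by
    have htri : L.BlockTriangular OrderDual.toDual := by
      intro i j hij
      have hij' : i.val < j.val := hij
      simp only [hL, Matrix.of_apply]
      rw [aB_of_gt (show (i.val : ℤ) < (j.val : ℤ) by exact_mod_cast hij')]
      norm_num
    rw [Matrix.det_of_lowerTriangular L htri]
    apply Finset.prod_eq_one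
    intro i _
    simp only [hL, Matrix.of_apply]
    rw [aB_diag]
    norm_num
  rw [hdet]
  norm_num

lemma dCoeff_succ (n : ℕ) :
    dCoeff (n + 1) = (catalan n : ℚ) * (2 : ℚ) ^ (-(2 * (n : ℤ) + 1)) := by
  rw [dCoeff]
  have e1 : 2 * (n + 1) - 2 = 2 * n := by omega
  have e2 : (n + 1) - 1 = n := by omega
  have e3 : (1 : ℤ) - 2 * ((n + 1 : ℕ) : ℤ) = -(2 * (n : ℤ) + 1) := by push_cast; ring
  rw [e1, e2, e3]
  congr 1
  have h4 : ((n + 1 : ℕ) : ℚ) * (catalan n : ℚ) = ((2 * n).choose n : ℚ) := by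
    exact_mod_cast congrArg (Nat.cast (R := ℚ))
      ((succ_mul_catalan_eq_centralBinom n).trans (by rw [Nat.centralBinom]))
  have hne : ((n + 1 : ℕ) : ℚ) ≠ 0 := by positivity
  push_cast at h4 ⊢
  field_simp
  linarith [h4]

lemma sum_odd (k : ℕ) : ∑ i ∈ range k, (2 * i + 1) = k ^ 2 := by
  induction k with
  | zero => simp
  | succ k ih => rw [Finset.sum_range_succ, ih]; ring

lemma sum_even (k : ℕ) : ∑ i ∈ range k, 2 * i = k ^ 2 - k := by
  induction k with
  | zero => simp
  | succ k ih =>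
    rw [Finset.sum_range_succ, ih]
    have : k ≤ k ^ 2 := by nlinarith
    have : (k + 1) ≤ (k + 1) ^ 2 := by nlinarith
    ring_nf
    omega

/-- The `k × k` Hankel determinant with `(i,j)`-entry `d_{i+j-1}` (for `1 ≤ i, j ≤ k`)
equals `2^{k - 2k²}`. -/
theorem stmt_3 (k : ℕ) (hk : 1 ≤ k) :
    Matrix.det (Matrix.of fun i j : Fin k => dCoeff (i.val + j.val + 1))
      = (2 : ℚ) ^ ((k : ℤ) - 2 * (k : ℤ) ^ 2) := by
  have hM : (Matrix.of fun i j : Fin k => dCoeff (i.val + j.val + 1))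
      = Matrix.of (fun i j : Fin k => (2 : ℚ) ^ (-(2 * (i.val : ℤ) + 1)) *
          (Matrix.of (fun i j : Fin k => (2 : ℚ) ^ (-(2 * (j.val : ℤ))) *
            (Matrix.of fun i j : Fin k => (catalan (i.val + j.val) : ℚ)) i j)) i j) := by
    ext i j
    simp only [Matrix.of_apply]
    rw [dCoeff_succ (i.val + j.val)]
    have hz : (2 : ℚ) ^ (-(2 * (i.val : ℤ) + 1)) * (2 : ℚ) ^ (-(2 * (j.val : ℤ)))
        = (2 : ℚ) ^ (-(2 * ((i.val + j.val : ℕ) : ℤ) + 1)) := by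
      rw [← zpow_add₀ (two_ne_zero)]
      congr 1
      push_cast
      ring
    rw [← mul_assoc, hz, mul_comm]
  rw [hM, Matrix.det_mul_column, Matrix.det_mul_row, catalan_hankel_det]
  have hu : ∏ i : Fin k, (2 : ℚ) ^ (-(2 * (i.val : ℤ) + 1)) = ((2 : ℚ) ^ (k ^ 2 : ℕ))⁻¹ := by
    have h1 : ∀ i : Fin k, (2 : ℚ) ^ (-(2 * (i.val : ℤ) + 1))
        = ((2 : ℚ) ^ ((2 * i.val + 1 : ℕ)))⁻¹ := by
      intro i
      rw [← zpow_natCast (2 : ℚ) (2 * i.val + 1), ← _root_.zpow_neg]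
      norm_cast
    rw [Finset.prod_congr rfl (fun i _ => h1 i), Finset.prod_inv_distrib]
    congr 1
    rw [Finset.prod_pow_eq_pow_sum, Fin.sum_univ_eq_sum_range (fun i => 2 * i + 1) k, sum_odd]
  have hv : ∏ i : Fin k, (2 : ℚ) ^ (-(2 * (i.val : ℤ))) = ((2 : ℚ) ^ (k ^ 2 - k : ℕ))⁻¹ := by
    have h1 : ∀ i : Fin k, (2 : ℚ) ^ (-(2 * (i.val : ℤ)))
        = ((2 : ℚ) ^ ((2 * i.val : ℕ)))⁻¹ := by
      intro i
      rw [← zpow_natCast (2 : ℚ) (2 * i.val), ← _root_.zpow_neg]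
      norm_cast
    rw [Finset.prod_congr rfl (fun i _ => h1 i), Finset.prod_inv_distrib]
    congr 1
    rw [Finset.prod_pow_eq_pow_sum, Fin.sum_univ_eq_sum_range (fun i => 2 * i) k, sum_even]
  rw [hu, hv]
  have hkk : k ≤ k ^ 2 := by nlinarith
  rw [mul_one, ← zpow_natCast (2 : ℚ) (k ^ 2), ← zpow_natCast (2 : ℚ) (k ^ 2 - k),
    ← _root_.zpow_neg, ← _root_.zpow_neg, ← zpow_add₀ (two_ne_zero)]
  congr 1
  push_cast [Nat.cast_sub hkk]
  ring
end

section
/- For every integer k ≥ 1 there exist polynomials f, g ∈ ℚ[t] of degree at most k with f(0) = g(0) = 1 such that f(t)² − (1−t)·g(t)² = 16^{−k}·t^{2k+1}. Moreover such a pair (f,g) is unique among pairs of polynomials of degree ≤ k with constant term 1 satisfying f² ≡ (1−t)g² (mod t^{2k+1}). -/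
open Polynomial

/-- Recursive construction of the Padé numerator/denominator pair (after `u = 1-t`). -/
noncomputable def padeAB : ℕ → ℚ[X] × ℚ[X]
  | 0 => (1, 1)
  | (k+1) =>
    ((1 + X) * (padeAB k).1 + 2 * X * (padeAB k).2,
     2 * (padeAB k).1 + (1 + X) * (padeAB k).2)

lemma padeAB_key (k : ℕ) :
    (padeAB k).1 ^ 2 - X * (padeAB k).2 ^ 2 = (1 - X) ^ (2 * k + 1) := by
  induction k with
  | zero => simp [padeAB]
  | succ n ih =>
    have h : 2 * (n+1) + 1 = (2*n+1) + 2 := by ring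
    rw [padeAB, h, pow_add, ← ih]
    ring

lemma padeAB_deg (k : ℕ) :
    (padeAB k).1.natDegree ≤ k ∧ (padeAB k).2.natDegree ≤ k := by
  induction k with
  | zero => simp [padeAB]
  | succ n ih =>
    obtain ⟨h1, h2⟩ := ih
    constructor
    · refine le_trans (natDegree_add_le _ _) (max_le ?_ ?_)
      · refine le_trans (natDegree_mul_le) ?_
        have : ((1 : ℚ[X]) + X).natDegree ≤ 1 := by
          refine le_trans (natDegree_add_le _ _) (by simp)
        omega
      · refine le_trans (natDegree_mul_le) ?_
        have : ((2 : ℚ[X]) * X).natDegree ≤ 1 := by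
          refine le_trans (natDegree_mul_le) (by simp)
        omega
    · refine le_trans (natDegree_add_le _ _) (max_le ?_ ?_)
      · refine le_trans (natDegree_mul_le) (by simp; omega)
      · refine le_trans (natDegree_mul_le) ?_
        have : ((1 : ℚ[X]) + X).natDegree ≤ 1 := by
          refine le_trans (natDegree_add_le _ _) (by simp)
        omega

lemma padeAB_eval (k : ℕ) :
    (padeAB k).1.eval 1 = 4 ^ k ∧ (padeAB k).2.eval 1 = 4 ^ k := by
  induction k with
  | zero => simp [padeAB]
  | succ n ih =>
    obtain ⟨h1, h2⟩ := ih
    simp [padeAB, h1, h2]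
    constructor <;> ring

/-- helper: polynomial divisible by `X^n` with small degree is `C c * X^n`. -/
lemma pade_aux (n : ℕ) (d : ℚ[X]) (hdvd : X ^ n ∣ d) (hdeg : d.natDegree ≤ n) :
    ∃ c : ℚ, d = C c * X ^ n := by
  obtain ⟨q, hq⟩ := hdvd
  rcases eq_or_ne q 0 with rfl | hq0
  · exact ⟨0, by simp [hq]⟩
  · have hd0 : d ≠ 0 := by
      rw [hq]; exact mul_ne_zero (pow_ne_zero _ X_ne_zero) hq0
    have : d.natDegree = n + q.natDegree := by
      rw [hq, natDegree_mul (pow_ne_zero _ X_ne_zero) hq0, natDegree_X_pow]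
    have hq1 : q.natDegree = 0 := by omega
    refine ⟨q.coeff 0, ?_⟩
    conv_lhs => rw [hq, eq_C_of_natDegree_le_zero hq1.le]
    ring

/-- Existence and uniqueness of the `[k/k]` Padé-type approximation to `√(1-t)`:
there exist `f, g ∈ ℚ[t]` of degree `≤ k` with constant term `1` such that
`f² - (1-t)g² = 16^{-k} t^{2k+1}`, and such a pair is unique among pairs of degree `≤ k`
with constant term `1` satisfying `f² ≡ (1-t)g² (mod t^{2k+1})`. -/
theorem stmt_5 (k : ℕ) (hk : 1 ≤ k) :
    (∃ f g : ℚ[X], f.natDegree ≤ k ∧ g.natDegree ≤ k ∧ f.coeff 0 = 1 ∧ g.coeff 0 = 1 ∧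
      f ^ 2 - (1 - X) * g ^ 2 = C (((16 : ℚ) ^ k)⁻¹) * X ^ (2 * k + 1)) ∧
    (∀ f g f' g' : ℚ[X],
      f.natDegree ≤ k → g.natDegree ≤ k → f.coeff 0 = 1 → g.coeff 0 = 1 →
      f'.natDegree ≤ k → g'.natDegree ≤ k → f'.coeff 0 = 1 → g'.coeff 0 = 1 →
      X ^ (2 * k + 1) ∣ f ^ 2 - (1 - X) * g ^ 2 →
      X ^ (2 * k + 1) ∣ f' ^ 2 - (1 - X) * g' ^ 2 →
      f = f' ∧ g = g') := by
  constructor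
  · -- existence
    obtain ⟨hA, hB⟩ := padeAB_deg k
    obtain ⟨eA, eB⟩ := padeAB_eval k
    set c : ℚ := ((4 : ℚ) ^ k)⁻¹ with hc
    have hc0 : ((4:ℚ) ^ k) ≠ 0 := by positivity
    refine ⟨C c * (padeAB k).1.comp (1 - X), C c * (padeAB k).2.comp (1 - X), ?_, ?_, ?_, ?_, ?_⟩
    · refine le_trans (natDegree_mul_le) ?_
      have := natDegree_comp_le (p := (padeAB k).1) (q := 1 - X)
      have h1 : ((1 : ℚ[X]) - X).natDegree ≤ 1 :=
        le_trans (natDegree_sub_le _ _) (by simp)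
      simp only [natDegree_C, zero_add]
      calc ((padeAB k).1.comp (1-X)).natDegree ≤ (padeAB k).1.natDegree * (1-X:ℚ[X]).natDegree :=
            natDegree_comp_le
        _ ≤ k * 1 := Nat.mul_le_mul hA h1
        _ = k := by ring
    · refine le_trans (natDegree_mul_le) ?_
      have h1 : ((1 : ℚ[X]) - X).natDegree ≤ 1 :=
        le_trans (natDegree_sub_le _ _) (by simp)
      simp only [natDegree_C, zero_add]
      calc ((padeAB k).2.comp (1-X)).natDegree ≤ (padeAB k).2.natDegree * (1-X:ℚ[X]).natDegree :=
            natDegree_comp_le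
        _ ≤ k * 1 := Nat.mul_le_mul hB h1
        _ = k := by ring
    · rw [mul_coeff_zero, coeff_C_zero, coeff_zero_eq_eval_zero, eval_comp]
      simp [eA, hc, inv_mul_cancel₀ hc0]
    · rw [mul_coeff_zero, coeff_C_zero, coeff_zero_eq_eval_zero, eval_comp]
      simp [eB, hc, inv_mul_cancel₀ hc0]
    · have key : ((padeAB k).1.comp (1-X)) ^ 2 - (1 - X) * ((padeAB k).2.comp (1-X)) ^ 2
          = X ^ (2 * k + 1) := by
        have := congrArg (fun p => p.comp (1 - X)) (padeAB_key k)
        simp only [sub_comp, pow_comp, mul_comp, X_comp, one_comp] at this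
        rw [this]
        norm_num
      have hc16 : c ^ 2 = ((16 : ℚ) ^ k)⁻¹ := by
        have h16 : (16:ℚ) ^ k = ((4:ℚ) ^ k) ^ 2 := by
          rw [← pow_mul, mul_comm, pow_mul]; norm_num
        rw [hc, h16, inv_pow]
      calc (C c * (padeAB k).1.comp (1-X)) ^ 2 - (1-X) * (C c * (padeAB k).2.comp (1-X)) ^ 2
          = C c ^ 2 * (((padeAB k).1.comp (1-X)) ^ 2 - (1-X) * ((padeAB k).2.comp (1-X)) ^ 2) := by
            ring
        _ = C (((16:ℚ)^k)⁻¹) * X ^ (2*k+1) := by rw [key, ← C_pow, hc16]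
  · -- uniqueness
    intro f g f' g' hf hg hf0 hg0 hf' hg' hf0' hg0' hd hd'
    set n := 2 * k + 1 with hn
    have h1X : ((1:ℚ[X]) - X).natDegree = 1 := by
      have h : (1:ℚ[X]) - X = -(X - C 1) := by simp
      rw [h, natDegree_neg, natDegree_X_sub_C]
    have h1Xne : ((1:ℚ[X]) - X) ≠ 0 := fun h => by rw [h] at h1X; simp at h1X
    -- Step 1 : f * g' = f' * g
    have key1 : f * g' = f' * g := by
      have h1 : X ^ n ∣ (f * g' - f' * g) * (f * g' + f' * g) := by
        have h2 : (f * g' - f' * g) * (f * g' + f' * g)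
            = (f ^ 2 - (1 - X) * g ^ 2) * g' ^ 2 - (f' ^ 2 - (1 - X) * g' ^ 2) * g ^ 2 := by
          ring
        rw [h2]
        exact dvd_sub (hd.mul_right _) (hd'.mul_right _)
      have h2 : ¬ (X : ℚ[X]) ∣ (f * g' + f' * g) := by
        rw [X_dvd_iff, coeff_add, mul_coeff_zero, mul_coeff_zero, hf0, hg0, hf0', hg0']
        norm_num
      have h3 : X ^ n ∣ (f * g' - f' * g) :=
        prime_X.pow_dvd_of_dvd_mul_right n h2 h1
      by_contra hne
      have hne' : f * g' - f' * g ≠ 0 := sub_ne_zero_of_ne hne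
      have h4 := natDegree_le_of_dvd h3 hne'
      rw [natDegree_X_pow] at h4
      have h5 : (f * g' - f' * g).natDegree ≤ 2 * k := by
        refine le_trans (natDegree_sub_le _ _) (max_le ?_ ?_) <;>
          exact le_trans natDegree_mul_le (by omega)
      omega
    -- d = C c * X^n
    have hdeg_d : (f ^ 2 - (1 - X) * g ^ 2).natDegree ≤ n := by
      refine le_trans (natDegree_sub_le _ _) (max_le ?_ ?_)
      · exact le_trans natDegree_pow_le (by omega)
      · refine le_trans natDegree_mul_le ?_
        have h2 := natDegree_pow_le (p := g) (n := 2)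
        omega
    obtain ⟨c, hc⟩ := pade_aux n _ hd hdeg_d
    set p := f' - f with hp
    set q := g' - g with hq
    have hpk : p.natDegree ≤ k := le_trans (natDegree_sub_le _ _) (max_le hf' hf)
    have hqk : q.natDegree ≤ k := le_trans (natDegree_sub_le _ _) (max_le hg' hg)
    have hpq : f * q = g * p := by rw [hp, hq]; linear_combination key1
    have hq0 : q.coeff 0 = 0 := by rw [hq, coeff_sub, hg0, hg0']; ring
    have hgne : g ≠ 0 := fun h => by simp [h] at hg0
    have main : g ^ 2 * (p ^ 2 - (1 - X) * q ^ 2) = C c * X ^ n * q ^ 2 := by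
      linear_combination q ^ 2 * hc - (g * p + f * q) * hpq
    have hqz : q = 0 ∧ p = 0 := by
      rcases eq_or_ne c 0 with hc0 | hc0
      · rw [hc0, map_zero, zero_mul, zero_mul] at main
        have hr : p ^ 2 = (1 - X) * q ^ 2 :=
          sub_eq_zero.mp ((mul_eq_zero.mp main).resolve_left (pow_ne_zero 2 hgne))
        have hqz : q = 0 := by
          by_contra hqne
          have hpne : p ≠ 0 := by
            intro h
            have h0 : (1 - X : ℚ[X]) * q ^ 2 = 0 := by rw [← hr, h]; ring
            rcases mul_eq_zero.mp h0 with h1 | h1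
            · exact h1Xne h1
            · exact hqne ((pow_eq_zero_iff (two_ne_zero)).mp h1)
          have e1 : (p ^ 2).natDegree = 2 * p.natDegree := natDegree_pow p 2
          have e2 : ((1 - X) * q ^ 2).natDegree = 1 + 2 * q.natDegree := by
            rw [natDegree_mul h1Xne (pow_ne_zero 2 hqne), h1X, natDegree_pow]
          rw [hr, e2] at e1
          omega
        refine ⟨hqz, ?_⟩
        rw [hqz] at hr
        have : p ^ 2 = 0 := by rw [hr]; ring
        exact (pow_eq_zero_iff (two_ne_zero)).mp this
      · -- c ≠ 0
        have hXg : ¬ (X : ℚ[X]) ∣ g ^ 2 := by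
          rw [X_dvd_iff, pow_two, mul_coeff_zero, hg0]; norm_num
        have hdvd_r : X ^ n ∣ (p ^ 2 - (1 - X) * q ^ 2) := by
          refine prime_X.pow_dvd_of_dvd_mul_right n hXg ⟨C c * q ^ 2, ?_⟩
          rw [mul_comm (p ^ 2 - (1 - X) * q ^ 2) (g ^ 2), main]; ring
        have hdeg_r : (p ^ 2 - (1 - X) * q ^ 2).natDegree ≤ n := by
          refine le_trans (natDegree_sub_le _ _) (max_le ?_ ?_)
          · exact le_trans natDegree_pow_le (by omega)
          · refine le_trans natDegree_mul_le ?_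
            have h2 := natDegree_pow_le (p := q) (n := 2)
            omega
        obtain ⟨e, he⟩ := pade_aux n _ hdvd_r hdeg_r
        have hcan : g ^ 2 * C e = C c * q ^ 2 := by
          have hXn : (X : ℚ[X]) ^ n ≠ 0 := pow_ne_zero _ X_ne_zero
          apply mul_right_cancel₀ hXn
          calc g ^ 2 * C e * X ^ n = g ^ 2 * (C e * X ^ n) := by ring
            _ = C c * X ^ n * q ^ 2 := by rw [← he, main]
            _ = C c * q ^ 2 * X ^ n := by ring
        have he0 : e = 0 := by
          have h := congrArg (fun r => r.coeff 0) hcan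
          simp only [coeff_zero_eq_eval_zero, eval_mul, eval_pow, eval_C] at h
          rw [← coeff_zero_eq_eval_zero, ← coeff_zero_eq_eval_zero, hg0, hq0] at h
          simpa using h
        have hq2 : q = 0 := by
          have h : C c * q ^ 2 = 0 := by rw [← hcan, he0]; simp
          rcases mul_eq_zero.mp h with h1 | h1
          · exact absurd (by simpa using h1 : c = 0) hc0
          · exact (pow_eq_zero_iff (two_ne_zero)).mp h1
        refine ⟨hq2, ?_⟩
        have h : p ^ 2 = 0 := by
          have h2 := he
          rw [he0, hq2] at h2
          simpa using h2
        exact (pow_eq_zero_iff (two_ne_zero)).mp h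
    obtain ⟨hq1, hp1⟩ := hqz
    rw [hp] at hp1
    rw [hq] at hq1
    exact ⟨(sub_eq_zero.mp hp1).symm, (sub_eq_zero.mp hq1).symm⟩
end

section
/- Let k ≥ 1, and let f, g ∈ ℚ[t] be polynomials of degree at most k with f(0) = g(0) = 1 satisfying f(t)² ≡ (1−t)·g(t)² (mod t^{2k+1}). Then the coefficient of t^k in g equals (−1/4)^k; in particular g has exact degree k. -/
open Polynomial

noncomputable def PQaux : ℕ → ℚ[X] × ℚ[X]
  | 0 => (1, 1)
  | k+1 => ((2 - X) * (PQaux k).1 + (2 - 2*X) * (PQaux k).2,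
            (2 - X) * (PQaux k).2 + 2 * (PQaux k).1)

lemma PQaux_key (k : ℕ) :
    (PQaux k).1 ^ 2 - (1 - X) * (PQaux k).2 ^ 2 = X ^ (2*k+1) := by
  induction k with
  | zero => simp [PQaux]
  | succ n ih =>
    have h : (PQaux (n+1)).1 ^ 2 - (1 - X) * (PQaux (n+1)).2 ^ 2
        = X^2 * ((PQaux n).1 ^ 2 - (1 - X) * (PQaux n).2 ^ 2) := by
      show ((2 - X) * (PQaux n).1 + (2 - 2*X) * (PQaux n).2) ^ 2
          - (1 - X) * ((2 - X) * (PQaux n).2 + 2 * (PQaux n).1) ^ 2 = _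
      ring
    rw [h, ih, ← pow_add]
    congr 1
    ring

lemma PQaux_eval0 (k : ℕ) :
    (PQaux k).1.eval 0 = 4 ^ k ∧ (PQaux k).2.eval 0 = 4 ^ k := by
  induction k with
  | zero => simp [PQaux]
  | succ n ih =>
    obtain ⟨h1, h2⟩ := ih
    constructor <;>
    · show Polynomial.eval 0 _ = _
      simp [PQaux, h1, h2]
      ring

lemma PQaux_deg (k : ℕ) :
    (PQaux k).1.natDegree ≤ k ∧ (PQaux k).2.natDegree ≤ k := by
  induction k with
  | zero => simp [PQaux]
  | succ n ih =>
    obtain ⟨h1, h2⟩ := ih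
    have hd1 : (2 - X : ℚ[X]).natDegree ≤ 1 := by compute_degree
    have hd2 : (2 - 2*X : ℚ[X]).natDegree ≤ 1 := by compute_degree
    constructor
    · refine le_trans (natDegree_add_le _ _) (max_le ?_ ?_)
      · exact le_trans (natDegree_mul_le) (by omega)
      · exact le_trans (natDegree_mul_le) (by omega)
    · refine le_trans (natDegree_add_le _ _) (max_le ?_ ?_)
      · exact le_trans (natDegree_mul_le) (by omega)
      · refine le_trans (natDegree_mul_le) ?_
        have : (2 : ℚ[X]).natDegree = 0 := natDegree_ofNat 2
        omega

lemma PQaux_coeff (k : ℕ) : (PQaux k).2.coeff k = (-1) ^ k := by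
  induction k with
  | zero => simp [PQaux]
  | succ n ih =>
    have hP : (PQaux n).1.coeff (n+1) = 0 :=
      coeff_eq_zero_of_natDegree_lt (lt_of_le_of_lt (PQaux_deg n).1 (by omega))
    have hQ : (PQaux n).2.coeff (n+1) = 0 :=
      coeff_eq_zero_of_natDegree_lt (lt_of_le_of_lt (PQaux_deg n).2 (by omega))
    show ((2 - X) * (PQaux n).2 + 2 * (PQaux n).1).coeff (n+1) = _
    have e : (2 - X) * (PQaux n).2 + 2 * (PQaux n).1
        = 2 * (PQaux n).2 - X * (PQaux n).2 + 2 * (PQaux n).1 := by ring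
    rw [e]
    rw [coeff_add, coeff_sub, coeff_X_mul]
    simp [hP, hQ, ih]
    ring

/-- If `f, g ∈ ℚ[t]` have degree `≤ k`, constant term `1`, and satisfy
`f² ≡ (1-t)g² (mod t^{2k+1})`, then the coefficient of `t^k` in `g` equals `(-1/4)^k`;
in particular `g` has exact degree `k`. -/
theorem stmt_6 (k : ℕ) (hk : 1 ≤ k) (f g : ℚ[X])
    (hf : f.natDegree ≤ k) (hg : g.natDegree ≤ k)
    (hf0 : f.coeff 0 = 1) (hg0 : g.coeff 0 = 1)
    (hcong : X ^ (2 * k + 1) ∣ f ^ 2 - (1 - X) * g ^ 2) :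
    g.coeff k = (-(1 : ℚ) / 4) ^ k ∧ g.natDegree = k := by
  set P := (PQaux k).1 with hPdef
  set Q := (PQaux k).2 with hQdef
  have hPQ : P ^ 2 - (1 - X) * Q ^ 2 = X ^ (2*k+1) := PQaux_key k
  have hP0 : P.coeff 0 = (4:ℚ) ^ k := by
    rw [coeff_zero_eq_eval_zero]; exact (PQaux_eval0 k).1
  have hQ0 : Q.coeff 0 = (4:ℚ) ^ k := by
    rw [coeff_zero_eq_eval_zero]; exact (PQaux_eval0 k).2
  have hPd : P.natDegree ≤ k := (PQaux_deg k).1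
  have hQd : Q.natDegree ≤ k := (PQaux_deg k).2
  have hQk : Q.coeff k = (-1) ^ k := PQaux_coeff k
  -- Step A
  have hA : X ^ (2*k+1) ∣ (f * Q - P * g) * (f * Q + P * g) := by
    have e : (f * Q - P * g) * (f * Q + P * g)
        = (f ^ 2 - (1 - X) * g ^ 2) * Q ^ 2 - (P ^ 2 - (1 - X) * Q ^ 2) * g ^ 2 := by
      ring
    rw [e, hPQ]
    exact dvd_sub (hcong.mul_right _) (dvd_mul_right _ _)
  -- Step B
  have hB : ¬ (X : ℚ[X]) ∣ (f * Q + P * g) := by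
    rw [X_dvd_iff]
    rw [coeff_add, mul_coeff_zero, mul_coeff_zero, hf0, hg0, hP0, hQ0]
    positivity
  have hdvd : X ^ (2*k+1) ∣ f * Q - P * g :=
    (prime_X (R := ℚ)).pow_dvd_of_dvd_mul_right _ hB hA
  -- Step C
  have heq : f * Q = P * g := by
    by_contra hne
    have hne0 : f * Q - P * g ≠ 0 := sub_ne_zero_of_ne hne
    have hle := natDegree_le_of_dvd hdvd hne0
    rw [natDegree_X_pow] at hle
    have h1 : (f * Q).natDegree ≤ 2*k := le_trans natDegree_mul_le (by omega)
    have h2 : (P * g).natDegree ≤ 2*k := le_trans natDegree_mul_le (by omega)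
    have := natDegree_sub_le (f * Q) (P * g)
    omega
  -- Step D: coprimality
  have hcopQX : IsCoprime Q (X : ℚ[X]) := by
    have : (X : ℚ[X]) ∣ Q - C (Q.coeff 0) := by
      rw [X_dvd_iff]; simp
    obtain ⟨r, hr⟩ := this
    refine ⟨C ((4:ℚ)^k)⁻¹, -C ((4:ℚ)^k)⁻¹ * r, ?_⟩
    have : Q = X * r + C ((4:ℚ)^k) := by rw [← hQ0]; linear_combination hr
    rw [this]
    have hC : (C ((4:ℚ)^k)⁻¹) * C ((4:ℚ)^k) = 1 := by
      rw [← C_mul]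
      norm_num
    linear_combination hC
  have hcopP2 : IsCoprime (P ^ 2) Q := by
    have hX : IsCoprime ((X:ℚ[X]) ^ (2*k+1)) Q := (hcopQX.symm.pow_left)
    have e : P ^ 2 = X ^ (2*k+1) + Q * ((1 - X) * Q) := by linear_combination hPQ
    rw [e]
    exact hX.add_mul_left_left _
  have hcop : IsCoprime P Q := (IsCoprime.pow_left_iff (by norm_num)).mp hcopP2
  -- Step E: Q ∣ g
  have hQg : Q ∣ g := by
    refine hcop.symm.dvd_of_dvd_mul_left ?_
    rw [← heq]
    exact dvd_mul_left Q f
  obtain ⟨u, hu⟩ := hQg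
  -- Step F
  have hg0' : g ≠ 0 := fun h => by simp [h] at hg0
  have hQne : Q ≠ 0 := fun h => by
    rw [h] at hQ0; simp at hQ0
    exact pow_ne_zero k (by norm_num : (4:ℚ) ≠ 0) hQ0.symm
  have hQdeg : Q.natDegree = k := by
    refine le_antisymm hQd ?_
    refine le_natDegree_of_ne_zero ?_
    rw [hQk]
    exact pow_ne_zero k (by norm_num)
  have hune : u ≠ 0 := fun h => by rw [h, mul_zero] at hu; exact hg0' hu
  have hdeg : g.natDegree = Q.natDegree + u.natDegree := by
    rw [hu]; exact natDegree_mul hQne hune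
  have hud : u.natDegree = 0 := by omega
  obtain ⟨a, ha⟩ := natDegree_eq_zero.mp hud
  have ha1 : a = ((4:ℚ)^k)⁻¹ := by
    have : g.coeff 0 = Q.coeff 0 * a := by
      rw [hu, ← ha, mul_coeff_zero, coeff_C]
      simp
    rw [hg0, hQ0] at this
    field_simp at this ⊢
    linarith
  have hgk : g.coeff k = (-(1:ℚ)/4) ^ k := by
    rw [hu, ← ha, mul_comm, coeff_C_mul, ha1, hQk]
    rw [div_pow, div_eq_mul_inv]
    ring
  refine ⟨hgk, le_antisymm hg ?_⟩
  refine le_natDegree_of_ne_zero ?_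
  rw [hgk]
  exact pow_ne_zero k (by norm_num)
end

section
/- Let k ≥ 1 and n ≥ 1 be integers. There exist formal power series p_1,…,p_k, q_1,…,q_k ∈ ℂ[[z]] with p_i(0) = q_i(0) = 0 for all i, such that the identity of polynomials in the variable w, w·∏_{i=1}^k (w − p_i(z))² ≡ (w − z)·∏_{i=1}^k (w − q_i(z))², holds with all coefficients taken modulo z^n, if and only if n ≤ 2k+1. -/
/-!
Write `p i = z α i`, `q i = z β i` and substitute `w ↦ z w`: the polynomial
`D = w ∏ (w - p i)² - (w - z) ∏ (w - q i)²` becomes `z ^ (2k+1) H` with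
`H = w ∏ (w - α i)² - (w - 1) ∏ (w - β i)²`, i.e. `z ^ m D_m = z ^ (2k+1) H_m` coefficientwise.
If `z ^ (2k+2)` divided every `D_m`, then `H` would vanish modulo `z`, which is impossible: in
`w ∏ (w - α i(0))² = (w - 1) ∏ (w - β i(0))²` the root `1` has even multiplicity on the left and
odd multiplicity on the right.
Conversely, if `α i`, `β i` are the roots of a solution `(A, B)` of the polynomial Pell equation
`w A² - (w - 1) B² = 1` with `deg A = deg B = k` and equal leading coefficients, then `H` is
constant and `D` vanishes modulo `z ^ (2k+1)`.
-/

open Polynomial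

theorem Polynomial.coeff_comp_C_mul_X {R : Type*} [CommSemiring R] (p : R[X]) (r : R) (m : ℕ) :
    (p.comp (C r * X)).coeff m = r ^ m * p.coeff m := by
  induction p using Polynomial.induction_on' with
  | add p q hp hq => simp [add_comp, hp, hq, mul_add]
  | monomial n a =>
    rw [← C_mul_X_pow_eq_monomial, mul_comp, C_comp, X_pow_comp, mul_pow, ← C_pow, ← mul_assoc,
      ← C_mul, coeff_C_mul_X_pow, coeff_C_mul_X_pow]
    split_ifs with h
    · rw [h, mul_comm]
    · rw [mul_zero]

theorem Multiset.exists_fin_prod_map_eq {α M : Type*} [CommMonoid M] (s : Multiset α)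
    (f : α → M) : ∃ a : Fin (Multiset.card s) → α, (s.map f).prod = ∏ i, f (a i) := by
  induction s using Quotient.inductionOn with
  | h l => exact ⟨fun i => l[i], (Fin.prod_univ_fun_getElem l f).symm⟩

theorem Polynomial.exists_fin_eq_C_leadingCoeff_mul_prod {K : Type*} [Field K] [IsAlgClosed K]
    {P : K[X]} {k : ℕ} (hP : P.natDegree = k) :
    ∃ a : Fin k → K, P = C P.leadingCoeff * ∏ i, (X - C (a i)) := by
  have hsplit := IsAlgClosed.splits P
  rw [← hP, hsplit.natDegree_eq_card_roots]
  obtain ⟨a, ha⟩ := P.roots.exists_fin_prod_map_eq (X - C ·)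
  exact ⟨a, by rw [← ha]; exact hsplit.eq_prod_roots⟩

section SqProdDiff

variable {R : Type*} [CommRing R] {ι : Type*} [Fintype ι]

noncomputable def sqProdDiff (r : R) (p q : ι → R) : R[X] :=
  X * ∏ i, (X - C (p i)) ^ 2 - (X - C r) * ∏ i, (X - C (q i)) ^ 2

theorem map_sqProdDiff {S : Type*} [CommRing S] (f : R →+* S) (r : R) (p q : ι → R) :
    (sqProdDiff r p q).map f = sqProdDiff (f r) (f ∘ p) (f ∘ q) := by
  simp [sqProdDiff, Polynomial.map_prod]

theorem sqProdDiff_comp_C_mul_X (r : R) (a b : ι → R) :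
    (sqProdDiff r (fun i => r * a i) (fun i => r * b i)).comp (C r * X) =
      C (r ^ (2 * Fintype.card ι + 1)) * sqProdDiff 1 a b := by
  have factor (c : R) : (X - C (r * c)).comp (C r * X) = C r * (X - C c) := by
    rw [sub_comp, X_comp, C_comp, C_mul, mul_sub]
  have scale (c : ι → R) : (∏ i, (X - C (r * c i)) ^ 2).comp (C r * X) =
      C r ^ (2 * Fintype.card ι) * ∏ i, (X - C (c i)) ^ 2 := by
    simp only [prod_comp, pow_comp, factor, mul_pow, Finset.prod_mul_distrib, Finset.prod_const,
      Finset.card_univ, ← pow_mul]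
  simp only [sqProdDiff, sub_comp, mul_comp, X_comp, C_comp, scale, C_pow, C_1]
  ring

theorem pow_mul_coeff_sqProdDiff (r : R) (a b : ι → R) (m : ℕ) :
    r ^ m * (sqProdDiff r (fun i => r * a i) (fun i => r * b i)).coeff m =
      r ^ (2 * Fintype.card ι + 1) * (sqProdDiff 1 a b).coeff m := by
  rw [← coeff_comp_C_mul_X, sqProdDiff_comp_C_mul_X, coeff_C_mul]

theorem sqProdDiff_ne_zero [IsDomain R] {r : R} (hr : r ≠ 0) (p q : ι → R) :
    sqProdDiff r p q ≠ 0 := by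
  set P := ∏ i, (X - C (p i))
  set Q := ∏ i, (X - C (q i))
  have hP : P ≠ 0 := (monic_prod_of_monic _ _ fun i _ => monic_X_sub_C (p i)).ne_zero
  have hQ : Q ≠ 0 := (monic_prod_of_monic _ _ fun i _ => monic_X_sub_C (q i)).ne_zero
  have hXr : (X - C r) * Q ^ 2 ≠ 0 := mul_ne_zero (X_sub_C_ne_zero r) (pow_ne_zero 2 hQ)
  intro h
  rw [sqProdDiff, Finset.prod_pow, Finset.prod_pow, sub_eq_zero] at h
  have := congrArg (rootMultiplicity r) h
  rw [rootMultiplicity_mul (h ▸ hXr), rootMultiplicity_mul hXr, sq, sq,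
    rootMultiplicity_mul (mul_ne_zero hP hP), rootMultiplicity_mul (mul_ne_zero hQ hQ),
    rootMultiplicity_X_sub_C_self, rootMultiplicity_eq_zero (by simpa [IsRoot] using hr)] at this
  omega

end SqProdDiff

section PellPair

variable {R : Type*} [CommRing R]

/-- `√X A_k + √(X - 1) B_k = (√X + √(X - 1)) ^ (2k + 1)`, so `(A_k, B_k)` solves the Pell
equation `X A² - (X - 1) B² = 1`. -/
noncomputable def pellPair : ℕ → R[X] × R[X]
  | 0 => (1, 1)
  | k + 1 => ((2 * X - 1) * (pellPair k).1 + 2 * (X - 1) * (pellPair k).2,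
      2 * X * (pellPair k).1 + (2 * X - 1) * (pellPair k).2)

theorem pellPair_pell (k : ℕ) :
    X * (pellPair k).1 ^ 2 - (X - 1) * (pellPair k).2 ^ 2 = (1 : R[X]) := by
  induction k with
  | zero => simp [pellPair]
  | succ k ih => simp only [pellPair]; linear_combination ih

theorem pellPair_natDegree_le_and_coeff (k : ℕ) :
    ((pellPair k).1 : R[X]).natDegree ≤ k ∧ ((pellPair k).2 : R[X]).natDegree ≤ k ∧
      ((pellPair k).1 : R[X]).coeff k = 4 ^ k ∧ ((pellPair k).2 : R[X]).coeff k = 4 ^ k := by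
  induction k with
  | zero => simp [pellPair]
  | succ k ih =>
    obtain ⟨hA, hB, hAk, hBk⟩ := ih
    set A : R[X] := (pellPair k).1
    set B : R[X] := (pellPair k).2
    have hA' : (pellPair (k + 1)).1 = X * (2 * A + 2 * B) - (A + 2 * B) := by
      simp only [pellPair]; ring
    have hB' : (pellPair (k + 1)).2 = X * (2 * A + 2 * B) - B := by
      simp only [pellPair]; ring
    have hS : (2 * A + 2 * B).natDegree ≤ k :=
      natDegree_add_le_of_degree_le (natDegree_mul_le.trans (by simpa using hA))
        (natDegree_mul_le.trans (by simpa using hB))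
    have hXS : (X * (2 * A + 2 * B)).natDegree ≤ k + 1 :=
      natDegree_mul_le.trans (by linarith [natDegree_X_le (R := R)])
    have hT : (A + 2 * B).natDegree ≤ k :=
      natDegree_add_le_of_degree_le hA (natDegree_mul_le.trans (by simpa using hB))
    have hS_coeff : (2 * A + 2 * B).coeff k = 4 ^ (k + 1) := by
      rw [coeff_add, coeff_ofNat_mul, coeff_ofNat_mul, hAk, hBk]; ring
    refine ⟨?_, ?_, ?_, ?_⟩
    · rw [hA']; exact (natDegree_sub_le _ _).trans (max_le hXS (hT.trans k.le_succ))
    · rw [hB']; exact (natDegree_sub_le _ _).trans (max_le hXS (hB.trans k.le_succ))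
    · rw [hA', coeff_sub, coeff_X_mul, hS_coeff,
        coeff_eq_zero_of_natDegree_lt (hT.trans_lt k.lt_succ_self), sub_zero]
    · rw [hB', coeff_sub, coeff_X_mul, hS_coeff,
        coeff_eq_zero_of_natDegree_lt (hB.trans_lt k.lt_succ_self), sub_zero]

end PellPair

theorem exists_sqProdDiff_one_eq_C {K : Type*} [Field K] [IsAlgClosed K] [NeZero (2 : K)]
    (k : ℕ) : ∃ (a b : Fin k → K) (c : K), sqProdDiff 1 a b = C c := by
  obtain ⟨hA, hB, hAk, hBk⟩ := pellPair_natDegree_le_and_coeff (R := K) k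
  have h4 : (4 : K) ^ k ≠ 0 :=
    pow_ne_zero k (by simpa [show (4 : K) = 2 ^ 2 by norm_num] using two_ne_zero)
  have hAdeg : ((pellPair k).1 : K[X]).natDegree = k :=
    hA.antisymm (le_natDegree_of_ne_zero (hAk ▸ h4))
  have hBdeg : ((pellPair k).2 : K[X]).natDegree = k :=
    hB.antisymm (le_natDegree_of_ne_zero (hBk ▸ h4))
  obtain ⟨a, ha⟩ := exists_fin_eq_C_leadingCoeff_mul_prod hAdeg
  obtain ⟨b, hb⟩ := exists_fin_eq_C_leadingCoeff_mul_prod hBdeg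
  rw [leadingCoeff, hAdeg, hAk] at ha
  rw [leadingCoeff, hBdeg, hBk] at hb
  have hscaled : C ((4 : K) ^ k) ^ 2 * sqProdDiff 1 a b = 1 := by
    rw [← pellPair_pell k, ha, hb, sqProdDiff, C_1, Finset.prod_pow, Finset.prod_pow]
    ring
  refine ⟨a, b, ((4 ^ k) ^ 2)⁻¹, ?_⟩
  calc sqProdDiff 1 a b = C ((4 ^ k) ^ 2)⁻¹ * (C ((4 : K) ^ k) ^ 2 * sqProdDiff 1 a b) := by
        rw [← mul_assoc, ← C_pow, ← C_mul, inv_mul_cancel₀ (pow_ne_zero 2 h4), C_1, one_mul]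
    _ = C ((4 ^ k) ^ 2)⁻¹ := by rw [hscaled, mul_one]

section PowerSeries

variable {R : Type*} [CommRing R] [IsDomain R] {ι : Type*} [Fintype ι]

theorem le_of_X_pow_dvd_coeff_sqProdDiff {n : ℕ} {p q : ι → PowerSeries R}
    (hp : ∀ i, PowerSeries.constantCoeff (p i) = 0)
    (hq : ∀ i, PowerSeries.constantCoeff (q i) = 0)
    (h : ∀ m, PowerSeries.X ^ n ∣ (sqProdDiff PowerSeries.X p q).coeff m) :
    n ≤ 2 * Fintype.card ι + 1 := by
  by_contra! hn
  choose α hα using fun i => PowerSeries.X_dvd_iff.mpr (hp i)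
  choose β hβ using fun i => PowerSeries.X_dvd_iff.mpr (hq i)
  obtain rfl : p = fun i => PowerSeries.X * α i := funext hα
  obtain rfl : q = fun i => PowerSeries.X * β i := funext hβ
  have hdvd (m : ℕ) : PowerSeries.X ∣ (sqProdDiff 1 α β).coeff m := by
    have : PowerSeries.X ^ (2 * Fintype.card ι + 1) * PowerSeries.X ∣
        PowerSeries.X ^ (2 * Fintype.card ι + 1) * (sqProdDiff 1 α β).coeff m := by
      rw [← pow_mul_coeff_sqProdDiff, ← pow_succ]
      exact ((pow_dvd_pow _ hn).trans (h m)).mul_left _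
    exact (mul_dvd_mul_iff_left (pow_ne_zero _ PowerSeries.X_ne_zero)).mp this
  apply sqProdDiff_ne_zero one_ne_zero (PowerSeries.constantCoeff ∘ α)
    (PowerSeries.constantCoeff ∘ β)
  rw [← map_one PowerSeries.constantCoeff, ← map_sqProdDiff]
  ext m
  simpa [PowerSeries.X_dvd_iff] using hdvd m

theorem X_pow_dvd_coeff_sqProdDiff {a b : ι → R} {c : R} (hc : sqProdDiff 1 a b = C c) {n : ℕ}
    (hn : n ≤ 2 * Fintype.card ι + 1) (m : ℕ) :
    PowerSeries.X ^ n ∣ (sqProdDiff PowerSeries.X (fun i => PowerSeries.X * PowerSeries.C (a i))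
      (fun i => PowerSeries.X * PowerSeries.C (b i))).coeff m := by
  have key := pow_mul_coeff_sqProdDiff PowerSeries.X (PowerSeries.C ∘ a) (PowerSeries.C ∘ b) m
  rw [← map_one PowerSeries.C, ← map_sqProdDiff, hc, Polynomial.map_C, coeff_C] at key
  simp only [Function.comp_apply] at key
  rcases m with _ | m
  · rw [pow_zero, one_mul] at key
    exact key ▸ (pow_dvd_pow _ hn).mul_right _
  · rw [if_neg m.succ_ne_zero, mul_zero] at key
    rw [(mul_eq_zero.mp key).resolve_left (pow_ne_zero _ PowerSeries.X_ne_zero)]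
    exact dvd_zero _

end PowerSeries

theorem stmt_7_general (k n : ℕ) :
    (∃ p q : Fin k → PowerSeries ℂ,
      (∀ i, PowerSeries.constantCoeff (p i) = 0) ∧
      (∀ i, PowerSeries.constantCoeff (q i) = 0) ∧
      (∀ m : ℕ, (PowerSeries.X : PowerSeries ℂ) ^ n ∣
        Polynomial.coeff
          ((X : Polynomial (PowerSeries ℂ)) * ∏ i, (X - C (p i)) ^ 2
            - (X - C PowerSeries.X) * ∏ i, (X - C (q i)) ^ 2) m))
    ↔ n ≤ 2 * k + 1 := by
  constructor
  · rintro ⟨p, q, hp, hq, h⟩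
    simpa using le_of_X_pow_dvd_coeff_sqProdDiff hp hq h
  · intro hn
    obtain ⟨a, b, c, hc⟩ := exists_sqProdDiff_one_eq_C (K := ℂ) k
    exact ⟨_, _, fun i => by simp, fun i => by simp,
      X_pow_dvd_coeff_sqProdDiff hc (by simpa using hn)⟩

/-- There exist power series `p_1,…,p_k, q_1,…,q_k ∈ ℂ[[z]]` vanishing at `0` such that
`w·∏ (w - p_i(z))² ≡ (w - z)·∏ (w - q_i(z))²` holds, as polynomials in `w` with all
coefficients taken modulo `z^n`, if and only if `n ≤ 2k + 1`. -/
theorem stmt_7 (k n : ℕ) (hk : 1 ≤ k) (hn : 1 ≤ n) :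
    (∃ p q : Fin k → PowerSeries ℂ,
      (∀ i, PowerSeries.constantCoeff (p i) = 0) ∧
      (∀ i, PowerSeries.constantCoeff (q i) = 0) ∧
      (∀ m : ℕ, (PowerSeries.X : PowerSeries ℂ) ^ n ∣
        Polynomial.coeff
          ((X : Polynomial (PowerSeries ℂ)) * ∏ i, (X - C (p i)) ^ 2
            - (X - C PowerSeries.X) * ∏ i, (X - C (q i)) ^ 2) m))
    ↔ n ≤ 2 * k + 1 :=
  stmt_7_general k n
end

section
/- For integers j ≥ 0 define a_j and b_j by: a_{2r} = ∑_{i=0}^r (2i+1), a_{2r+1} = ∑_{i=0}^r (2i+2), b_{2r} = ∑_{i=0}^r (−1)^{r+1−i}(2i+1), b_{2r+1} = ∑_{i=0}^r (−1)^{r+1−i}(2i+2). Then for every integer h ≥ 2, (h−2)·2^{2h−3} − ∑_{j=0}^{h−2} binom(2h+2, h−2−j) · (a_j − b_j)/2 = −2^{h−2}. -/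
/-!
With `c j = (aSeq j - bSeq j) / 2 = 1, 2, 3, 4, 6, 8, 10, 12, 15, …` one has
`c (j + 4) = c j + j + 5`, so `∑ c j x^j = 1 / ((1 - x)^2 (1 - x^4))`, and for `h = m + 2`
the sum in the theorem is
`T m = [x^m] (1 + x)^(2m+6) / ((1 - x)^2 (1 - x^4))`.
Writing `(1 + x)^2 = (1 - x)^2 + 4x` gives `T (m+1) = 4 T m + U (m+1)` with
`U n = [x^n] (1 + x)^(2n+4) / (1 - x^4)`, and writing `(1 + x)^2 = (1 + x^2) + 2x` gives
`U (n+1) = 2 U n + [x^(n+1)] (1 + x)^(2n+3) / (1 - x)`, the last coefficient being the half row sum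
`∑_{i ≤ n+1} binom(2n+3, i) = 4^(n+1)`. Solving these recurrences, `T m = m 2^(2m+1) + 2^m`.
-/

/-- `a_{2r} = ∑_{i=0}^r (2i+1)` and `a_{2r+1} = ∑_{i=0}^r (2i+2)`. -/
def aSeq (j : ℕ) : ℚ :=
  if j % 2 = 0 then ∑ i ∈ Finset.range (j / 2 + 1), (2 * (i : ℚ) + 1)
  else ∑ i ∈ Finset.range (j / 2 + 1), (2 * (i : ℚ) + 2)

/-- `b_{2r} = ∑_{i=0}^r (-1)^{r+1-i}(2i+1)` and `b_{2r+1} = ∑_{i=0}^r (-1)^{r+1-i}(2i+2)`. -/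
def bSeq (j : ℕ) : ℚ :=
  if j % 2 = 0 then
    ∑ i ∈ Finset.range (j / 2 + 1), (-1 : ℚ) ^ (j / 2 + 1 - i) * (2 * (i : ℚ) + 1)
  else
    ∑ i ∈ Finset.range (j / 2 + 1), (-1 : ℚ) ^ (j / 2 + 1 - i) * (2 * (i : ℚ) + 2)

open Finset PowerSeries

theorem sum_range_succ_neg_one_pow_sub_mul {R : Type*} [CommRing R] (f : ℕ → R) (n : ℕ) :
    ∑ i ∈ range (n + 1), (-1) ^ (n + 1 - i) * f i
      = -∑ i ∈ range n, (-1) ^ (n - i) * f i - f n := by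
  rw [sum_range_succ, Nat.add_sub_cancel_left, pow_one, neg_one_mul, sub_eq_add_neg,
    ← sum_neg_distrib]
  congr 1
  refine sum_congr rfl fun i hi => ?_
  rw [Nat.sub_add_comm (mem_range.mp hi).le, pow_succ]
  ring

theorem aSeq_add_two (j : ℕ) : aSeq (j + 2) = aSeq j + (j + 3) := by
  obtain ⟨r, rfl | rfl⟩ := Nat.even_or_odd' j
  · simp only [aSeq, show (2 * r + 2) % 2 = 0 by omega, show (2 * r + 2) / 2 = r + 1 by omega,
      show (2 * r) % 2 = 0 by omega, show 2 * r / 2 = r by omega, if_true,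
      sum_range_succ _ (r + 1)]
    push_cast; ring
  · simp only [aSeq, show (2 * r + 1 + 2) % 2 = 1 by omega,
      show (2 * r + 1 + 2) / 2 = r + 1 by omega, show (2 * r + 1) % 2 = 1 by omega,
      show (2 * r + 1) / 2 = r by omega, sum_range_succ _ (r + 1)]
    simp only [one_ne_zero, if_false]
    push_cast; ring

theorem bSeq_add_two (j : ℕ) : bSeq (j + 2) = -bSeq j - (j + 3) := by
  obtain ⟨r, rfl | rfl⟩ := Nat.even_or_odd' j
  · simp only [bSeq, show (2 * r + 2) % 2 = 0 by omega, show (2 * r + 2) / 2 = r + 1 by omega,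
      show (2 * r) % 2 = 0 by omega, show 2 * r / 2 = r by omega, if_true,
      sum_range_succ_neg_one_pow_sub_mul _ (r + 1)]
    push_cast; ring
  · simp only [bSeq, show (2 * r + 1 + 2) % 2 = 1 by omega,
      show (2 * r + 1 + 2) / 2 = r + 1 by omega, show (2 * r + 1) % 2 = 1 by omega,
      show (2 * r + 1) / 2 = r by omega, sum_range_succ_neg_one_pow_sub_mul _ (r + 1)]
    simp only [one_ne_zero, if_false]
    push_cast; ring

def cSeq (j : ℕ) : ℚ := (aSeq j - bSeq j) / 2

theorem cSeq_add_four (j : ℕ) : cSeq (j + 4) = cSeq j + (j + 5) := by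
  simp only [cSeq, aSeq_add_two, bSeq_add_two]
  push_cast; ring

theorem cSeq_of_lt_four {j : ℕ} (hj : j < 4) : cSeq j = j + 1 := by
  interval_cases j <;> norm_num [cSeq, aSeq, bSeq, sum_range_succ]

section DiagCoeff

variable {R : Type*} [CommRing R]

theorem coeff_one_sub_X_pow_mul (k n : ℕ) (φ : R⟦X⟧) :
    coeff n ((1 - X ^ k) * φ) = coeff n φ - if k ≤ n then coeff (n - k) φ else 0 := by
  rw [sub_mul, one_mul, map_sub, coeff_X_pow_mul']

theorem coeff_one_add_X_pow (N n : ℕ) : coeff n ((1 + X : R⟦X⟧) ^ N) = N.choose n := by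
  have h : (1 + X : R⟦X⟧) ^ N = (((1 + Polynomial.X) ^ N : Polynomial R) : R⟦X⟧) := by simp
  rw [h, Polynomial.coeff_coe, Polynomial.coeff_one_add_X_pow]

theorem coeff_mul_one_add_X_pow (φ : R⟦X⟧) (N n : ℕ) :
    coeff n (φ * (1 + X) ^ N) = ∑ k ∈ range (n + 1), coeff k φ * N.choose (n - k) := by
  rw [coeff_mul,
    Nat.sum_antidiagonal_eq_sum_range_succ (fun i j => coeff i φ * coeff j ((1 + X) ^ N))]
  simp only [coeff_one_add_X_pow]

noncomputable def diagCoeff (k : ℕ) (φ : R⟦X⟧) (n : ℕ) : R :=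
  coeff n (φ * (1 + X) ^ (2 * n + k))

theorem diagCoeff_zero (k : ℕ) (φ : R⟦X⟧) : diagCoeff k φ 0 = constantCoeff φ := by
  simp [diagCoeff, coeff_zero_eq_constantCoeff_apply]

theorem diagCoeff_add_one (k : ℕ) (φ : R⟦X⟧) (n : ℕ) :
    diagCoeff (k + 1) φ n = diagCoeff k ((1 + X) * φ) n := by
  rw [diagCoeff, diagCoeff, ← add_assoc, pow_succ]
  ring_nf

theorem diagCoeff_succ_of_one_add_X_sq_mul {k : ℕ} {φ ψ : R⟦X⟧} {a : R}
    (h : (1 + X) ^ 2 * φ = C a * X * φ + ψ) (n : ℕ) :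
    diagCoeff (k + 2) φ (n + 1) = a * diagCoeff (k + 2) φ n + diagCoeff k ψ (n + 1) := by
  have hpow : φ * (1 + X) ^ (2 * (n + 1) + (k + 2))
      = C a * (X * (φ * (1 + X) ^ (2 * n + (k + 2)))) + ψ * (1 + X) ^ (2 * (n + 1) + k) := by
    rw [show 2 * (n + 1) + (k + 2) = 2 + (2 * (n + 1) + k) by ring, pow_add, ← mul_assoc,
      mul_comm φ, h, show 2 * (n + 1) + k = 2 * n + (k + 2) by ring]
    ring
  rw [diagCoeff, hpow, map_add, coeff_C_mul, coeff_succ_X_mul, diagCoeff, diagCoeff]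

theorem diagCoeff_one_of_one_sub_X_mul_eq_one {G : R⟦X⟧} (hG : (1 - X) * G = 1) (n : ℕ) :
    diagCoeff 1 G n = 4 ^ n := by
  have hG' : G = PowerSeries.mk 1 := by
    linear_combination (-G) * mk_one_mul_one_sub_eq_one R + PowerSeries.mk 1 * hG
  rw [diagCoeff, mul_comm, coeff_mul, Nat.sum_antidiagonal_eq_sum_range_succ
    (fun i j => coeff i ((1 + X) ^ (2 * n + 1)) * coeff j G)]
  simp only [coeff_one_add_X_pow, hG', coeff_mk, Pi.one_apply, mul_one]
  exact_mod_cast congrArg (Nat.cast (R := R)) (Nat.sum_range_choose_halfway n)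

theorem diagCoeff_two_of_one_sub_X_sq_mul_eq_one {E : R⟦X⟧} (hE : (1 - X ^ 2) * E = 1)
    (n : ℕ) : diagCoeff 2 E n = 4 ^ n := by
  rw [diagCoeff_add_one]
  exact diagCoeff_one_of_one_sub_X_mul_eq_one (by linear_combination hE) n

theorem diagCoeff_four_of_one_sub_X_pow_four_mul_eq_one {Q : R⟦X⟧} (hQ : (1 - X ^ 4) * Q = 1)
    (n : ℕ) : diagCoeff 4 Q n = 2 ^ (2 * n + 1) - 2 ^ n := by
  induction n with
  | zero =>
    have hQ₀ : constantCoeff Q = 1 := by simpa using congrArg constantCoeff hQ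
    norm_num [diagCoeff_zero, hQ₀]
  | succ n ih =>
    have h : (1 + X) ^ 2 * Q = C 2 * X * Q + (1 + X ^ 2) * Q := by rw [map_ofNat]; ring
    rw [diagCoeff_succ_of_one_add_X_sq_mul h, ih,
      diagCoeff_two_of_one_sub_X_sq_mul_eq_one (by linear_combination hQ),
      show (4 : R) = 2 ^ 2 by norm_num, ← pow_mul]
    ring

theorem diagCoeff_six_of_one_sub_X_sq_mul_one_sub_X_pow_four_mul_eq_one {φ : R⟦X⟧}
    (hφ : (1 - X) ^ 2 * (1 - X ^ 4) * φ = 1) (n : ℕ) :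
    diagCoeff 6 φ n = n * 2 ^ (2 * n + 1) + 2 ^ n := by
  induction n with
  | zero =>
    have hφ₀ : constantCoeff φ = 1 := by simpa using congrArg constantCoeff hφ
    simp [diagCoeff_zero, hφ₀]
  | succ n ih =>
    have h : (1 + X) ^ 2 * φ = C 4 * X * φ + (1 - X) ^ 2 * φ := by rw [map_ofNat]; ring
    rw [diagCoeff_succ_of_one_add_X_sq_mul h, ih,
      diagCoeff_four_of_one_sub_X_pow_four_mul_eq_one (by linear_combination hφ)]
    push_cast
    ring

end DiagCoeff

theorem one_sub_X_pow_four_mul_mk_cSeq :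
    (1 - X ^ 4) * PowerSeries.mk cSeq = PowerSeries.mk fun n => ((1 + n).choose 1 : ℚ) := by
  ext n
  rw [coeff_one_sub_X_pow_mul, coeff_mk, coeff_mk, coeff_mk, Nat.choose_one_right]
  split_ifs with hn
  · obtain ⟨j, rfl⟩ := Nat.exists_eq_add_of_le' hn
    rw [Nat.add_sub_cancel, cSeq_add_four]
    push_cast; ring
  · rw [cSeq_of_lt_four (by omega)]
    push_cast; ring

/-- For every `h ≥ 2`,
`(h-2)·2^{2h-3} - ∑_{j=0}^{h-2} binom(2h+2, h-2-j)·(a_j - b_j)/2 = -2^{h-2}`. -/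
theorem stmt_11 (h : ℕ) (hh : 2 ≤ h) :
    ((h : ℚ) - 2) * 2 ^ (2 * h - 3)
      - ∑ j ∈ Finset.range (h - 1),
          (Nat.choose (2 * h + 2) (h - 2 - j) : ℚ) * ((aSeq j - bSeq j) / 2)
      = -(2 : ℚ) ^ (h - 2) := by
  obtain ⟨m, rfl⟩ : ∃ m, h = m + 2 := ⟨h - 2, by omega⟩
  have hsum : ∑ j ∈ range (m + 2 - 1),
      ((2 * (m + 2) + 2).choose (m + 2 - 2 - j) : ℚ) * ((aSeq j - bSeq j) / 2)
        = diagCoeff 6 (PowerSeries.mk cSeq) m := by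
    rw [diagCoeff, coeff_mul_one_add_X_pow]
    refine sum_congr (by congr 1) fun j _ => ?_
    rw [coeff_mk, cSeq, mul_comm, show 2 * (m + 2) + 2 = 2 * m + 6 by ring, Nat.add_sub_cancel]
  have hφ : (1 - X) ^ 2 * (1 - X ^ 4) * PowerSeries.mk cSeq = 1 := by
    rw [mul_assoc, one_sub_X_pow_four_mul_mk_cSeq, mul_comm]
    exact mk_add_choose_mul_one_sub_pow_eq_one ℚ 1
  rw [hsum, diagCoeff_six_of_one_sub_X_sq_mul_one_sub_X_pow_four_mul_eq_one hφ,
    show 2 * (m + 2) - 3 = 2 * m + 1 by omega, Nat.add_sub_cancel]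
  push_cast
  ring
end

section
/- Let k ≥ 1 and let f, g ∈ ℚ[t] be the unique polynomials of degree ≤ k with f(0)=g(0)=1 and f² ≡ (1−t)g² (mod t^{2k+1}). Then the error term satisfies: the coefficient of t^{2k+1} in (1−t)g(t)² − f(t)² equals −16^{−k}; in particular the congruence f² ≡ (1−t)g² cannot hold modulo t^{2k+2} for any polynomials f, g of degree ≤ k with constant term 1. -/
open Polynomial

/-- Scaled Padé pair for `√(1-t)`: `pqAux k = (4^k F_k, 4^k G_k)`. -/
noncomputable def pqAux : ℕ → ℚ[X] × ℚ[X]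
  | 0 => (1, 1)
  | k+1 => ((2 - X) * (pqAux k).1 + 2 * (1 - X) * (pqAux k).2,
            (2 - X) * (pqAux k).2 + 2 * (pqAux k).1)

lemma pqAux_key (k : ℕ) :
    (pqAux k).1 ^ 2 - (1 - X) * (pqAux k).2 ^ 2 = X ^ (2 * k + 1) := by
  induction k with
  | zero => simp [pqAux]
  | succ k ih =>
    have h2 : (pqAux (k+1)).1 = (2 - X) * (pqAux k).1 + 2 * (1 - X) * (pqAux k).2 := rfl
    have h3 : (pqAux (k+1)).2 = (2 - X) * (pqAux k).2 + 2 * (pqAux k).1 := rfl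
    rw [h2, h3]
    have key : ((2 - X) * (pqAux k).1 + 2 * (1 - X) * (pqAux k).2) ^ 2
        - (1 - X) * ((2 - X) * (pqAux k).2 + 2 * (pqAux k).1) ^ 2
        = X ^ 2 * ((pqAux k).1 ^ 2 - (1 - X) * (pqAux k).2 ^ 2) := by ring
    rw [key, ih, ← pow_add]
    congr 1
    omega

lemma pqAux_deg (k : ℕ) : (pqAux k).1.natDegree ≤ k ∧ (pqAux k).2.natDegree ≤ k := by
  induction k with
  | zero => simp [pqAux]
  | succ k ih =>
    have d1 : (2 - X : ℚ[X]).natDegree ≤ 1 := le_trans (natDegree_sub_le _ _) (by simp)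
    have d2 : (2 * (1 - X) : ℚ[X]).natDegree ≤ 1 := by
      refine le_trans natDegree_mul_le ?_
      simpa using le_trans (natDegree_sub_le (1 : ℚ[X]) X) (by simp)
    have d3 : (2 : ℚ[X]).natDegree ≤ 1 := by simp
    constructor
    · refine le_trans (natDegree_add_le _ _) (max_le ?_ ?_)
      · exact le_trans natDegree_mul_le (by have := ih.1; omega)
      · exact le_trans natDegree_mul_le (by have := ih.2; omega)
    · refine le_trans (natDegree_add_le _ _) (max_le ?_ ?_)
      · exact le_trans natDegree_mul_le (by have := ih.2; omega)
      · exact le_trans natDegree_mul_le (by have := ih.1; omega)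

lemma pqAux_coeff0 (k : ℕ) :
    (pqAux k).1.coeff 0 = 4 ^ k ∧ (pqAux k).2.coeff 0 = 4 ^ k := by
  induction k with
  | zero => simp [pqAux]
  | succ k ih =>
    have h2 : (pqAux (k+1)).1 = (2 - X) * (pqAux k).1 + 2 * (1 - X) * (pqAux k).2 := rfl
    have h3 : (pqAux (k+1)).2 = (2 - X) * (pqAux k).2 + 2 * (pqAux k).1 := rfl
    rw [h2, h3]
    constructor <;>
    · simp [coeff_add, mul_coeff_zero, coeff_sub, ih.1, ih.2]
      ring

/-- For the `[k/k]` Padé approximation data of `√(1-t)`: if `f, g ∈ ℚ[t]` have degree `≤ k`,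
constant term `1`, and `f² ≡ (1-t)g² (mod t^{2k+1})`, then the coefficient of `t^{2k+1}`
in `(1-t)g² - f²` equals `-16^{-k}`; in particular the congruence cannot hold modulo
`t^{2k+2}`. -/
theorem stmt_14 (k : ℕ) (hk : 1 ≤ k) (f g : ℚ[X])
    (hf : f.natDegree ≤ k) (hg : g.natDegree ≤ k)
    (hf0 : f.coeff 0 = 1) (hg0 : g.coeff 0 = 1)
    (hcong : X ^ (2 * k + 1) ∣ f ^ 2 - (1 - X) * g ^ 2) :
    ((1 - X) * g ^ 2 - f ^ 2).coeff (2 * k + 1) = -((16 : ℚ) ^ k)⁻¹ ∧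
    ¬ (X ^ (2 * k + 2) ∣ f ^ 2 - (1 - X) * g ^ 2) := by
  set P := (pqAux k).1 with hP
  set Q := (pqAux k).2 with hQ
  obtain ⟨q, hq⟩ := hcong
  have hkey : P ^ 2 - (1 - X) * Q ^ 2 = X ^ (2 * k + 1) := pqAux_key k
  have hP0 : P.coeff 0 = 4 ^ k := (pqAux_coeff0 k).1
  have hQ0 : Q.coeff 0 = 4 ^ k := (pqAux_coeff0 k).2
  have hPd : P.natDegree ≤ k := (pqAux_deg k).1
  have hQd : Q.natDegree ≤ k := (pqAux_deg k).2
  -- the cross-difference is divisible by X^(2k+1)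
  have hdvdDS : X ^ (2 * k + 1) ∣ (f * Q - P * g) * (f * Q + P * g) := by
    have hDS : (f * Q - P * g) * (f * Q + P * g)
        = (f ^ 2 - (1 - X) * g ^ 2) * Q ^ 2 - g ^ 2 * (P ^ 2 - (1 - X) * Q ^ 2) := by ring
    rw [hDS, hkey, hq]
    exact dvd_sub ((dvd_mul_right _ _).mul_right _) (dvd_mul_left _ _)
  have hSne : ¬ (X : ℚ[X]) ∣ (f * Q + P * g) := by
    rw [X_dvd_iff]
    simp only [coeff_add, mul_coeff_zero, hf0, hg0, hP0, hQ0, one_mul, mul_one]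
    positivity
  have hdvdD : X ^ (2 * k + 1) ∣ (f * Q - P * g) :=
    (prime_X (R := ℚ)).pow_dvd_of_dvd_mul_right _ hSne hdvdDS
  have hD0 : f * Q - P * g = 0 := by
    by_contra hne
    have hle := Polynomial.natDegree_le_of_dvd hdvdD hne
    rw [natDegree_X_pow] at hle
    have hd : (f * Q - P * g).natDegree ≤ 2 * k :=
      le_trans (natDegree_sub_le _ _) (max_le
        (le_trans natDegree_mul_le (by omega))
        (le_trans natDegree_mul_le (by omega)))
    omega
  -- identify the error coefficient
  have hmain : X ^ (2 * k + 1) * (q * Q ^ 2) = X ^ (2 * k + 1) * g ^ 2 := by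
    have step : (f ^ 2 - (1 - X) * g ^ 2) * Q ^ 2 = g ^ 2 * (P ^ 2 - (1 - X) * Q ^ 2) := by
      linear_combination (f * Q + P * g) * hD0
    calc X ^ (2 * k + 1) * (q * Q ^ 2) = (X ^ (2 * k + 1) * q) * Q ^ 2 := by ring
    _ = (f ^ 2 - (1 - X) * g ^ 2) * Q ^ 2 := by rw [← hq]
    _ = g ^ 2 * (P ^ 2 - (1 - X) * Q ^ 2) := step
    _ = X ^ (2 * k + 1) * g ^ 2 := by rw [hkey]; ring
  have hqQ : q * Q ^ 2 = g ^ 2 :=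
    mul_left_cancel₀ (pow_ne_zero _ X_ne_zero) hmain
  have hq0 : q.coeff 0 = ((16 : ℚ) ^ k)⁻¹ := by
    have h0 : (q * (Q * Q)).coeff 0 = (g * g).coeff 0 := by
      rw [show Q * Q = Q ^ 2 from (sq Q).symm, show g * g = g ^ 2 from (sq g).symm, hqQ]
    simp only [mul_coeff_zero, hQ0, hg0, one_mul, mul_one] at h0
    have h16 : (4 : ℚ) ^ k * 4 ^ k = 16 ^ k := by
      rw [← mul_pow]; norm_num
    have h1 : q.coeff 0 * ((16 : ℚ) ^ k) = 1 := by rw [← h16]; linear_combination h0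
    field_simp
    linarith [h1]
  have hco : (f ^ 2 - (1 - X) * g ^ 2).coeff (2 * k + 1) = ((16 : ℚ) ^ k)⁻¹ := by
    rw [hq]
    have := Polynomial.coeff_X_pow_mul q (2 * k + 1) 0
    rw [zero_add] at this
    rw [this, hq0]
  constructor
  · have : (1 - X) * g ^ 2 - f ^ 2 = -(f ^ 2 - (1 - X) * g ^ 2) := by ring
    rw [this, coeff_neg, hco]
  · intro hdvd2
    rw [Polynomial.X_pow_dvd_iff] at hdvd2
    have := hdvd2 (2 * k + 1) (by omega)
    rw [hco] at this
    have h16 : ((16 : ℚ) ^ k)⁻¹ ≠ 0 := by positivity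
    exact h16 this
end
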